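/- arXiv:2404.00755 — 7 statements merged into one kernel-verified Lean document; each statement's English description precedes it below -/
import Mathlib

section
/- Let N ≥ 1, c > 0, and for i = 1,…,N let m_i, ω_i > 0 and let f_i : ℝ³ → [0,∞) be integrable, writing p_i⁰ = √((c·m_i)² + |p|²). Define A⁰ = Σ_{i=1}^N ω_i ∫ f_i(p) dp and A⃗ = Σ_{i=1}^N ω_i ∫ (p/p_i⁰) f_i(p) dp ∈ ℝ³. Then (A⁰)² − |A⃗|² ≥ (Σ_{i=1}^N ω_i · c·m_i · ∫ f_i(p)/p_i⁰ dp)². -/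
open MeasureTheory
open scoped BigOperators

/-!
Write `g_i = f_i / p_i⁰` and regard `p ↦ g_i(p) • (c m_i, p)` as a density with values in the
Euclidean space `ℝ × ℝ³`. Since `‖(c m_i, p)‖ = p_i⁰`, this density has norm `f_i`, and the
vector `Σ ω_i ∫ g_i • (c m_i, p)` has components `(Σ ω_i c m_i ∫ g_i, A⃗)`. The triangle
inequality for sums and integrals bounds its norm by `Σ ω_i ∫ f_i = A⁰`, and squaring gives the
claim: the mass-shell inequality of the Minkowski square is Euclidean subadditivity in disguise.
-/

namespace WithLp

theorem norm_toLp_prod_eq_sqrt {E : Type*} [NormedAddCommGroup E] (a : ℝ) (p : E) :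
    ‖toLp 2 (a, p)‖ = √(a ^ 2 + ‖p‖ ^ 2) := by
  rw [prod_norm_eq_of_L2, toLp_fst, toLp_snd, Real.norm_eq_abs, sq_abs]

theorem sq_fst_le_sq_sub_norm_sq_snd {E : Type*} [NormedAddCommGroup E]
    {x : WithLp 2 (ℝ × E)} {t : ℝ} (hx : ‖x‖ ≤ t) : x.fst ^ 2 ≤ t ^ 2 - ‖x.snd‖ ^ 2 := by
  have hsq : ‖x‖ ^ 2 ≤ t ^ 2 := pow_le_pow_left₀ (norm_nonneg x) hx 2
  rw [prod_norm_sq_eq_of_L2, Real.norm_eq_abs, sq_abs] at hsq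
  linarith

end WithLp

section ShellDensity

variable {E : Type*} [NormedAddCommGroup E] [NormedSpace ℝ E]

/-- `(a, p)` has Euclidean norm `p⁰ = √(a² + ‖p‖²)`, so dividing by `p⁰` makes the norm `f p`. -/
noncomputable def shellDensity (a : ℝ) (f : E → ℝ) (p : E) : WithLp 2 (ℝ × E) :=
  (f p / √(a ^ 2 + ‖p‖ ^ 2)) • WithLp.toLp 2 (a, p)

theorem norm_shellDensity_le {a : ℝ} {f : E → ℝ} {p : E} (hf : 0 ≤ f p) :
    ‖shellDensity a f p‖ ≤ f p := by
  rw [shellDensity, norm_smul, WithLp.norm_toLp_prod_eq_sqrt, Real.norm_eq_abs,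
    abs_of_nonneg (div_nonneg hf (Real.sqrt_nonneg _))]
  rcases eq_or_ne (√(a ^ 2 + ‖p‖ ^ 2)) 0 with h0 | h0
  · simpa [h0] using hf
  · rw [div_mul_cancel₀ _ h0]

variable [MeasurableSpace E] [OpensMeasurableSpace E] [SecondCountableTopology E]
  {μ : Measure E} {a : ℝ} {f : E → ℝ}

theorem integrable_shellDensity (hf : Integrable f μ) (hnn : ∀ p, 0 ≤ f p) :
    Integrable (shellDensity a f) μ := by
  refine hf.mono' ?_ (.of_forall fun p => norm_shellDensity_le (hnn p))
  have hcont : Continuous fun p : E => √(a ^ 2 + ‖p‖ ^ 2) := by fun_prop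
  have hshell : Continuous fun p : E => WithLp.toLp 2 (a, p) :=
    (WithLp.prod_continuous_toLp 2 ℝ E).comp (by fun_prop)
  exact (hf.aemeasurable.div hcont.measurable.aemeasurable).aestronglyMeasurable.smul
    hshell.aestronglyMeasurable

theorem norm_integral_shellDensity_le (hf : Integrable f μ) (hnn : ∀ p, 0 ≤ f p) :
    ‖∫ p, shellDensity a f p ∂μ‖ ≤ ∫ p, f p ∂μ :=
  (norm_integral_le_integral_norm _).trans <|
    integral_mono (integrable_shellDensity hf hnn).norm hf fun p => norm_shellDensity_le (hnn p)

variable [CompleteSpace E]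

theorem fst_integral_shellDensity (hf : Integrable f μ) (hnn : ∀ p, 0 ≤ f p) :
    (∫ p, shellDensity a f p ∂μ).fst = a * ∫ p, f p / √(a ^ 2 + ‖p‖ ^ 2) ∂μ := by
  rw [← WithLp.fstL_apply (𝕜 := ℝ), ← ContinuousLinearMap.integral_comp_comm _
    (integrable_shellDensity hf hnn), ← integral_const_mul]
  simp only [WithLp.fstL_apply, shellDensity, WithLp.smul_fst, WithLp.toLp_fst, smul_eq_mul,
    mul_comm]

theorem snd_integral_shellDensity (hf : Integrable f μ) (hnn : ∀ p, 0 ≤ f p) :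
    (∫ p, shellDensity a f p ∂μ).snd = ∫ p, (f p / √(a ^ 2 + ‖p‖ ^ 2)) • p ∂μ := by
  rw [← WithLp.sndL_apply (𝕜 := ℝ), ← ContinuousLinearMap.integral_comp_comm _
    (integrable_shellDensity hf hnn)]
  simp only [WithLp.sndL_apply, shellDensity, WithLp.smul_snd, WithLp.toLp_snd]

end ShellDensity

theorem sq_sum_integral_div_sqrt_le {ι E : Type*} [Fintype ι] [NormedAddCommGroup E]
    [NormedSpace ℝ E] [CompleteSpace E] [SecondCountableTopology E] [MeasurableSpace E]
    [OpensMeasurableSpace E] (μ : Measure E) (a ω : ι → ℝ) (hω : ∀ i, 0 ≤ ω i)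
    (f : ι → E → ℝ) (hint : ∀ i, Integrable (f i) μ) (hnn : ∀ i p, 0 ≤ f i p) :
    (∑ i, ω i * a i * ∫ p, f i p / √(a i ^ 2 + ‖p‖ ^ 2) ∂μ) ^ 2 ≤
      (∑ i, ω i * ∫ p, f i p ∂μ) ^ 2 -
        ‖∑ i, ω i • ∫ p, (f i p / √(a i ^ 2 + ‖p‖ ^ 2)) • p ∂μ‖ ^ 2 := by
  set S := ∑ i, ω i • ∫ p, shellDensity (a i) (f i) p ∂μ
  have hS : ‖S‖ ≤ ∑ i, ω i * ∫ p, f i p ∂μ := by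
    refine (norm_sum_le _ _).trans (Finset.sum_le_sum fun i _ => ?_)
    rw [norm_smul, Real.norm_of_nonneg (hω i)]
    exact mul_le_mul_of_nonneg_left (norm_integral_shellDensity_le (hint i) (hnn i)) (hω i)
  have hfst : S.fst = ∑ i, ω i * a i * ∫ p, f i p / √(a i ^ 2 + ‖p‖ ^ 2) ∂μ := by
    rw [← WithLp.fstL_apply (𝕜 := ℝ), map_sum]
    refine Finset.sum_congr rfl fun i _ => ?_
    rw [map_smul, WithLp.fstL_apply, fst_integral_shellDensity (hint i) (hnn i), smul_eq_mul,
      mul_assoc]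
  have hsnd : S.snd = ∑ i, ω i • ∫ p, (f i p / √(a i ^ 2 + ‖p‖ ^ 2)) • p ∂μ := by
    rw [← WithLp.sndL_apply (𝕜 := ℝ), map_sum]
    refine Finset.sum_congr rfl fun i _ => ?_
    rw [map_smul, WithLp.sndL_apply, snd_integral_shellDensity (hint i) (hnn i)]
  simpa only [hfst, hsnd] using WithLp.sq_fst_le_sq_sub_norm_sq_snd hS

theorem stmt_2_general (N : ℕ) (c : ℝ)
    (m ω : Fin N → ℝ) (hω : ∀ i, 0 < ω i)
    (f : Fin N → EuclideanSpace ℝ (Fin 3) → ℝ)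
    (hint : ∀ i, Integrable (f i)) (hnn : ∀ i p, 0 ≤ f i p) :
    (∑ i, ω i * (c * m i) * ∫ p, f i p / Real.sqrt ((c * m i) ^ 2 + ‖p‖ ^ 2)) ^ 2 ≤
      (∑ i, ω i * ∫ p, f i p) ^ 2 -
        ‖∑ i, ω i • ∫ p : EuclideanSpace ℝ (Fin 3),
            (f i p / Real.sqrt ((c * m i) ^ 2 + ‖p‖ ^ 2)) • p‖ ^ 2 :=
  sq_sum_integral_div_sqrt_le volume (fun i => c * m i) ω (fun i => (hω i).le) f hint hnn

theorem stmt_2 (N : ℕ) (hN : 1 ≤ N) (c : ℝ) (hc : 0 < c)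
    (m ω : Fin N → ℝ) (hm : ∀ i, 0 < m i) (hω : ∀ i, 0 < ω i)
    (f : Fin N → EuclideanSpace ℝ (Fin 3) → ℝ)
    (hint : ∀ i, Integrable (f i)) (hnn : ∀ i p, 0 ≤ f i p) :
    (∑ i, ω i * (c * m i) * ∫ p, f i p / Real.sqrt ((c * m i) ^ 2 + ‖p‖ ^ 2)) ^ 2 ≤
      (∑ i, ω i * ∫ p, f i p) ^ 2 -
        ‖∑ i, ω i • ∫ p : EuclideanSpace ℝ (Fin 3),
            (f i p / Real.sqrt ((c * m i) ^ 2 + ‖p‖ ^ 2)) • p‖ ^ 2 :=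
  stmt_2_general N c m ω hω f hint hnn
end

section
/- Let N ≥ 1, c > 0, and for i = 1,…,N let m_i, ω_i > 0, a_{i,ℓ} > 0, a_{i,u} > 0, and let f_i : ℝ³ → [0,∞) be integrable with a_{i,ℓ} ≤ ∫ f_i(p)/p_i⁰ dp and ∫ f_i(p) dp ≤ a_{i,u}, where p_i⁰ = √((c·m_i)² + |p|²). Define A⁰ = Σ_i ω_i ∫ f_i dp and A⃗ = Σ_i ω_i ∫ (p/p_i⁰) f_i dp. Then (A⁰)² − |A⃗|² > 0 and the auxiliary velocity Ũ := c · A⃗ / √((A⁰)² − |A⃗|²) ∈ ℝ³ satisfies |Ũ| ≤ (max_{i} a_{i,u}) / (min_{i} m_i a_{i,ℓ}). -/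
/-!
For each species the pair `(p / p⁰, c mᵢ / p⁰)` is a unit vector of the Euclidean product
`ℝ³ × ℝ`, so the triangle inequality for the Bochner integral bounds the norm of
`(∫ (p / p⁰) fᵢ, c mᵢ ∫ fᵢ / p⁰)` by `∫ fᵢ`. Summing with the weights `ωᵢ` gives
`‖A⃗‖² + B² ≤ (A⁰)²` with `B = Σ ωᵢ c mᵢ ∫ fᵢ / p⁰ ≥ c (min mᵢ a_{i,ℓ}) Σ ωᵢ > 0`. Hence
`(A⁰)² - ‖A⃗‖² ≥ B² > 0` and `|Ũ| ≤ c A⁰ / B`, while `A⁰ ≤ (max a_{i,u}) Σ ωᵢ`.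
-/

open MeasureTheory WithLp

section L2Product

variable {E F : Type*} [NormedAddCommGroup E] [NormedAddCommGroup F]

theorem WithLp.norm_toLp_prod_eq_sqrt_s4 (x : E) (y : F) :
    ‖toLp 2 (x, y)‖ = √(‖x‖ ^ 2 + ‖y‖ ^ 2) :=
  prod_norm_eq_of_L2 _

variable [NormedSpace ℝ E] [NormedSpace ℝ F]

theorem sqrt_norm_sum_sq_add_norm_sum_sq_le {ι : Type*} (s : Finset ι) {w : ι → ℝ}
    (hw : ∀ i ∈ s, 0 ≤ w i) (x : ι → E) (y : ι → F) :
    √(‖∑ i ∈ s, w i • x i‖ ^ 2 + ‖∑ i ∈ s, w i • y i‖ ^ 2) ≤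
      ∑ i ∈ s, w i * √(‖x i‖ ^ 2 + ‖y i‖ ^ 2) := by
  have hsum : toLp 2 (∑ i ∈ s, w i • x i, ∑ i ∈ s, w i • y i) =
      ∑ i ∈ s, w i • toLp 2 (x i, y i) := by
    simp only [← toLp_smul, ← toLp_sum, Prod.smul_mk]
    congr 1
    ext <;> simp [Prod.fst_sum, Prod.snd_sum]
  calc _ = ‖∑ i ∈ s, w i • toLp 2 (x i, y i)‖ := by rw [← hsum, norm_toLp_prod_eq_sqrt_s4]
    _ ≤ ∑ i ∈ s, ‖w i • toLp 2 (x i, y i)‖ := norm_sum_le _ _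
    _ = ∑ i ∈ s, w i * √(‖x i‖ ^ 2 + ‖y i‖ ^ 2) := by
      refine Finset.sum_congr rfl fun i hi => ?_
      rw [norm_smul, Real.norm_of_nonneg (hw i hi), norm_toLp_prod_eq_sqrt_s4]

theorem sqrt_norm_integral_sq_add_norm_integral_sq_le [CompleteSpace E] [CompleteSpace F]
    {α : Type*} [MeasurableSpace α] {μ : Measure α} {u : α → E} {v : α → F}
    (hu : Integrable u μ) (hv : Integrable v μ) :
    √(‖∫ a, u a ∂μ‖ ^ 2 + ‖∫ a, v a ∂μ‖ ^ 2) ≤ ∫ a, √(‖u a‖ ^ 2 + ‖v a‖ ^ 2) ∂μ := by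
  have hint : ∫ a, toLp 2 (u a, v a) ∂μ = toLp 2 (∫ a, u a ∂μ, ∫ a, v a ∂μ) := by
    rw [← integral_pair hu hv]
    exact (prodContinuousLinearEquiv 2 ℝ E F).symm.toContinuousLinearMap.integral_comp_comm
      (hu.prodMk hv)
  simpa only [hint, norm_toLp_prod_eq_sqrt_s4] using
    norm_integral_le_integral_norm (μ := μ) fun a => toLp 2 (u a, v a)

end L2Product

section Energy

variable {E : Type*} [NormedAddCommGroup E] {κ : ℝ}

theorem abs_le_sqrt_sq_add_norm_sq (p : E) : |κ| ≤ √(κ ^ 2 + ‖p‖ ^ 2) :=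
  Real.abs_le_sqrt (le_add_of_nonneg_right (by positivity))

theorem norm_le_sqrt_sq_add_norm_sq (p : E) : ‖p‖ ≤ √(κ ^ 2 + ‖p‖ ^ 2) := by
  simpa using Real.abs_le_sqrt (x := ‖p‖) (y := κ ^ 2 + ‖p‖ ^ 2)
    (le_add_of_nonneg_left (by positivity))

theorem sqrt_sq_add_norm_sq_pos (hκ : κ ≠ 0) (p : E) : 0 < √(κ ^ 2 + ‖p‖ ^ 2) :=
  (abs_pos.2 hκ).trans_le (abs_le_sqrt_sq_add_norm_sq p)

theorem sqrt_norm_div_smul_sq_add_norm_mul_div_sq [NormedSpace ℝ E] (hκ : κ ≠ 0) (t : ℝ)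
    (p : E) :
    √(‖(t / √(κ ^ 2 + ‖p‖ ^ 2)) • p‖ ^ 2 + ‖κ * (t / √(κ ^ 2 + ‖p‖ ^ 2))‖ ^ 2) = |t| := by
  have hP := sqrt_sq_add_norm_sq_pos hκ p
  have hP2 : √(κ ^ 2 + ‖p‖ ^ 2) ^ 2 = κ ^ 2 + ‖p‖ ^ 2 := Real.sq_sqrt (by positivity)
  rw [← Real.sqrt_sq_eq_abs, norm_smul, Real.norm_eq_abs, Real.norm_eq_abs, mul_pow, sq_abs,
    sq_abs]
  congr 1
  field_simp
  rw [hP2]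
  ring

end Energy

namespace MeasureTheory

variable {E : Type*} [NormedAddCommGroup E] [MeasurableSpace E] [BorelSpace E]
  {μ : Measure E} {f : E → ℝ} {κ : ℝ}

theorem AEStronglyMeasurable.div_sqrt_sq_add_norm_sq (hf : AEStronglyMeasurable f μ) :
    AEStronglyMeasurable (fun p => f p / √(κ ^ 2 + ‖p‖ ^ 2)) μ :=
  (hf.aemeasurable.div (by fun_prop)).aestronglyMeasurable

theorem Integrable.div_sqrt_sq_add_norm_sq (hf : Integrable f μ) (hκ : κ ≠ 0) :
    Integrable (fun p => f p / √(κ ^ 2 + ‖p‖ ^ 2)) μ := by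
  refine (hf.norm.div_const |κ|).mono' hf.1.div_sqrt_sq_add_norm_sq (.of_forall fun p => ?_)
  rw [norm_div, Real.norm_of_nonneg (Real.sqrt_nonneg _)]
  exact div_le_div_of_nonneg_left (norm_nonneg _) (abs_pos.2 hκ)
    (abs_le_sqrt_sq_add_norm_sq p)

theorem Integrable.div_sqrt_sq_add_norm_sq_smul [NormedSpace ℝ E] [SecondCountableTopology E]
    (hf : Integrable f μ) : Integrable (fun p => (f p / √(κ ^ 2 + ‖p‖ ^ 2)) • p) μ := by
  refine hf.norm.mono' (hf.1.div_sqrt_sq_add_norm_sq.smul aestronglyMeasurable_id)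
    (.of_forall fun p => ?_)
  rw [norm_smul, norm_div, Real.norm_of_nonneg (Real.sqrt_nonneg _), div_mul_eq_mul_div]
  exact div_le_of_le_mul₀ (Real.sqrt_nonneg _) (norm_nonneg _)
    (mul_le_mul_of_nonneg_left (norm_le_sqrt_sq_add_norm_sq p) (norm_nonneg _))

end MeasureTheory

section MomentumIntegral

variable {E : Type*} [NormedAddCommGroup E] [NormedSpace ℝ E] [CompleteSpace E]
  [MeasurableSpace E] [BorelSpace E] [SecondCountableTopology E] {μ : Measure E} {f : E → ℝ}
  {κ : ℝ}

theorem sqrt_norm_integral_div_smul_sq_add_sq_le (hf : Integrable f μ) (hκ : κ ≠ 0) :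
    √(‖∫ p, (f p / √(κ ^ 2 + ‖p‖ ^ 2)) • p ∂μ‖ ^ 2 +
        ‖κ * ∫ p, f p / √(κ ^ 2 + ‖p‖ ^ 2) ∂μ‖ ^ 2) ≤ ∫ p, |f p| ∂μ := by
  rw [← integral_const_mul]
  simpa only [sqrt_norm_div_smul_sq_add_norm_mul_div_sq hκ] using
    sqrt_norm_integral_sq_add_norm_integral_sq_le (hf.div_sqrt_sq_add_norm_sq_smul (κ := κ))
      ((hf.div_sqrt_sq_add_norm_sq hκ).const_mul κ)

end MomentumIntegral

section Velocity

variable {V : Type*} [NormedAddCommGroup V] {A : V} {A₀ B : ℝ}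

theorem sq_sub_norm_sq_pos (hB : 0 < B) (h : √(‖A‖ ^ 2 + B ^ 2) ≤ A₀) :
    0 < A₀ ^ 2 - ‖A‖ ^ 2 := by
  have := (Real.sqrt_le_iff.1 h).2
  nlinarith

theorem norm_div_sqrt_sq_sub_norm_sq_smul_le [NormedSpace ℝ V] {c : ℝ} (hc : 0 ≤ c)
    (hB : 0 < B) (h : √(‖A‖ ^ 2 + B ^ 2) ≤ A₀) :
    ‖(c / √(A₀ ^ 2 - ‖A‖ ^ 2)) • A‖ ≤ c * A₀ / B := by
  obtain ⟨hA₀, hsq⟩ := Real.sqrt_le_iff.1 h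
  have hA : ‖A‖ ≤ A₀ := by nlinarith [norm_nonneg A]
  have hBD : B ≤ √(A₀ ^ 2 - ‖A‖ ^ 2) := (Real.le_sqrt' hB).2 (by linarith)
  rw [norm_smul, Real.norm_of_nonneg (by positivity), div_mul_eq_mul_div]
  exact div_le_div₀ (by positivity) (mul_le_mul_of_nonneg_left hA hc) hB hBD

theorem mul_div_le_div_of_le_mul_of_mul_le {c W U L : ℝ} (hc : 0 < c) (hW : 0 < W)
    (hL : 0 < L) (hA₀ : 0 ≤ A₀) (hU : A₀ ≤ W * U) (hB : W * (c * L) ≤ B) :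
    c * A₀ / B ≤ U / L :=
  calc c * A₀ / B ≤ c * (W * U) / (W * (c * L)) :=
        div_le_div₀ (mul_nonneg hc.le (hA₀.trans hU)) (mul_le_mul_of_nonneg_left hU hc.le)
          (by positivity) hB
    _ = U / L := by field_simp

end Velocity

theorem stmt_4_general (N : ℕ) (hN : 1 ≤ N) (c : ℝ) (hc : 0 < c)
    (m ω al au : Fin N → ℝ) (hm : ∀ i, 0 < m i) (hω : ∀ i, 0 < ω i)
    (hal : ∀ i, 0 < al i)
    (f : Fin N → EuclideanSpace ℝ (Fin 3) → ℝ)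
    (hint : ∀ i, Integrable (f i)) (hnn : ∀ i p, 0 ≤ f i p)
    (hlow : ∀ i, al i ≤ ∫ p, f i p / Real.sqrt ((c * m i) ^ 2 + ‖p‖ ^ 2))
    (hup : ∀ i, (∫ p, f i p) ≤ au i)
    (A0 : ℝ) (Avec : EuclideanSpace ℝ (Fin 3))
    (hA0 : A0 = ∑ i, ω i * ∫ p, f i p)
    (hAv : Avec = ∑ i, ω i • ∫ p : EuclideanSpace ℝ (Fin 3),
        (f i p / Real.sqrt ((c * m i) ^ 2 + ‖p‖ ^ 2)) • p) :
    0 < A0 ^ 2 - ‖Avec‖ ^ 2 ∧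
      ‖(c / Real.sqrt (A0 ^ 2 - ‖Avec‖ ^ 2)) • Avec‖ ≤
        (⨆ i, au i) / (⨅ i, m i * al i) := by
  have : Nonempty (Fin N) := ⟨⟨0, hN⟩⟩
  set v : Fin N → EuclideanSpace ℝ (Fin 3) :=
    fun i => ∫ p, (f i p / √((c * m i) ^ 2 + ‖p‖ ^ 2)) • p
  set b : Fin N → ℝ := fun i => c * m i * ∫ p, f i p / √((c * m i) ^ 2 + ‖p‖ ^ 2)
  set B := ∑ i, ω i * b i
  set U := ⨆ i, au i
  set L := ⨅ i, m i * al i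
  have hcone : √(‖Avec‖ ^ 2 + B ^ 2) ≤ A0 := by
    calc _ ≤ ∑ i, ω i * √(‖v i‖ ^ 2 + ‖b i‖ ^ 2) := by
          simpa [hAv, sq_abs] using sqrt_norm_sum_sq_add_norm_sum_sq_le Finset.univ
            (fun i _ => (hω i).le) v b
      _ ≤ ∑ i, ω i * ∫ p, |f i p| := Finset.sum_le_sum fun i _ => mul_le_mul_of_nonneg_left
          (sqrt_norm_integral_div_smul_sq_add_sq_le (hint i) (mul_pos hc (hm i)).ne') (hω i).le
      _ = A0 := by simp only [abs_of_nonneg (hnn _ _), hA0]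
  have hA0U : A0 ≤ (∑ i, ω i) * U := by
    rw [hA0, Finset.sum_mul]
    exact Finset.sum_le_sum fun i _ => mul_le_mul_of_nonneg_left
      ((hup i).trans (le_ciSup (Set.finite_range _).bddAbove i)) (hω i).le
  have hLB : (∑ i, ω i) * (c * L) ≤ B := by
    rw [Finset.sum_mul]
    refine Finset.sum_le_sum fun i _ => mul_le_mul_of_nonneg_left ?_ (hω i).le
    calc c * L ≤ c * (m i * al i) :=
          mul_le_mul_of_nonneg_left (ciInf_le (Set.finite_range _).bddBelow i) hc.le
      _ ≤ b i := by
          rw [← mul_assoc]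
          exact mul_le_mul_of_nonneg_left (hlow i) (mul_pos hc (hm i)).le
  have hL : 0 < L := by
    obtain ⟨j, hj⟩ := exists_eq_ciInf_of_finite (f := fun i => m i * al i)
    exact (mul_pos (hm j) (hal j)).trans_eq hj
  have hW : 0 < ∑ i, ω i := Finset.sum_pos (fun i _ => hω i) Finset.univ_nonempty
  have hB : 0 < B := lt_of_lt_of_le (by positivity) hLB
  exact ⟨sq_sub_norm_sq_pos hB hcone, (norm_div_sqrt_sq_sub_norm_sq_smul_le hc.le hB hcone).trans
    (mul_div_le_div_of_le_mul_of_mul_le hc hW hL ((Real.sqrt_nonneg _).trans hcone) hA0U hLB)⟩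

theorem stmt_4 (N : ℕ) (hN : 1 ≤ N) (c : ℝ) (hc : 0 < c)
    (m ω al au : Fin N → ℝ) (hm : ∀ i, 0 < m i) (hω : ∀ i, 0 < ω i)
    (hal : ∀ i, 0 < al i) (hau : ∀ i, 0 < au i)
    (f : Fin N → EuclideanSpace ℝ (Fin 3) → ℝ)
    (hint : ∀ i, Integrable (f i)) (hnn : ∀ i p, 0 ≤ f i p)
    (hlow : ∀ i, al i ≤ ∫ p, f i p / Real.sqrt ((c * m i) ^ 2 + ‖p‖ ^ 2))
    (hup : ∀ i, (∫ p, f i p) ≤ au i)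
    (A0 : ℝ) (Avec : EuclideanSpace ℝ (Fin 3))
    (hA0 : A0 = ∑ i, ω i * ∫ p, f i p)
    (hAv : Avec = ∑ i, ω i • ∫ p : EuclideanSpace ℝ (Fin 3),
        (f i p / Real.sqrt ((c * m i) ^ 2 + ‖p‖ ^ 2)) • p) :
    0 < A0 ^ 2 - ‖Avec‖ ^ 2 ∧
      ‖(c / Real.sqrt (A0 ^ 2 - ‖Avec‖ ^ 2)) • Avec‖ ≤
        (⨆ i, au i) / (⨅ i, m i * al i) :=
  stmt_4_general N hN c hc m ω al au hm hω hal f hint hnn hlow hup A0 Avec hA0 hAv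
end

section
/- Let N ≥ 1, c > 0, and for i = 1,…,N let m_i, ω_i > 0, a_{i,ℓ} > 0, a_{i,u} > 0, and let f_i : ℝ³ → [0,∞) be integrable with a_{i,ℓ} ≤ ∫ f_i(p)/p_i⁰ dp and ∫ f_i(p) dp ≤ a_{i,u}, where p_i⁰ = √((c·m_i)² + |p|²). Define Φ_i(β) = (∫ e^{−cβ p_i⁰} dp)/(∫ e^{−cβ p_i⁰} dp/p_i⁰) for β > 0. Suppose β̃ > 0 satisfies Σ_{i=1}^N ω_i Φ_i(β̃) ∫ f_i(p)/p_i⁰ dp = √((Σ_i ω_i ∫ f_i dp)² − |Σ_i ω_i ∫ (p/p_i⁰) f_i dp|²). Then there exists j ∈ {1,…,N} with Φ_j(β̃) ≤ 2 a_{j,u}/a_{j,ℓ}. -/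
/-! The right-hand side of the equation for `β` is at most `∑ i, ω i * ∫ f i`, so some summand
obeys `Φ j β * ∫ f j / p⁰ ≤ ∫ f j`, and hence `Φ j β ≤ au j / al j ≤ 2 * au j / al j`. -/

open MeasureTheory
open scoped BigOperators

lemma Real.sqrt_sq_sub_sq_le {S : ℝ} (hS : 0 ≤ S) (t : ℝ) : √(S ^ 2 - t ^ 2) ≤ S :=
  (Real.sqrt_le_left hS).2 (sub_le_self _ (sq_nonneg t))

lemma Finset.exists_le_of_sum_mul_le_sum_mul {ι : Type*} {s : Finset ι} (hs : s.Nonempty)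
    {ω x y : ι → ℝ} (hω : ∀ i ∈ s, 0 < ω i) (h : ∑ i ∈ s, ω i * x i ≤ ∑ i ∈ s, ω i * y i) :
    ∃ j ∈ s, x j ≤ y j := by
  obtain ⟨j, hj, hle⟩ := Finset.exists_le_of_sum_le hs h
  exact ⟨j, hj, le_of_mul_le_mul_left hle (hω j hj)⟩

lemma le_div_of_mul_le_of_le {φ a b u l : ℝ} (hl : 0 < l) (hlb : l ≤ b) (ha : 0 ≤ a)
    (hau : a ≤ u) (h : φ * b ≤ a) : φ ≤ u / l :=
  calc φ ≤ a / b := (le_div_iff₀ (hl.trans_le hlb)).2 h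
    _ ≤ u / l := div_le_div₀ (ha.trans hau) hau hl hlb

theorem stmt_5_general (N : ℕ) (hN : 1 ≤ N) (c : ℝ)
    (m ω al au : Fin N → ℝ) (hω : ∀ i, 0 < ω i)
    (hal : ∀ i, 0 < al i)
    (f : Fin N → EuclideanSpace ℝ (Fin 3) → ℝ)
    (hnn : ∀ i p, 0 ≤ f i p)
    (hlow : ∀ i, al i ≤ ∫ p, f i p / Real.sqrt ((c * m i) ^ 2 + ‖p‖ ^ 2))
    (hup : ∀ i, (∫ p, f i p) ≤ au i)
    (Φ : Fin N → ℝ → ℝ)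
    (β : ℝ)
    (heq : ∑ i, ω i * Φ i β * ∫ p, f i p / Real.sqrt ((c * m i) ^ 2 + ‖p‖ ^ 2) =
      Real.sqrt ((∑ i, ω i * ∫ p, f i p) ^ 2 -
        ‖∑ i, ω i • ∫ p : EuclideanSpace ℝ (Fin 3),
            (f i p / Real.sqrt ((c * m i) ^ 2 + ‖p‖ ^ 2)) • p‖ ^ 2)) :
    ∃ j, Φ j β ≤ 2 * au j / al j := by
  have hmass : ∀ i, 0 ≤ ∫ p, f i p := fun i => integral_nonneg (hnn i)
  have hdom : ∑ i, ω i * (Φ i β * ∫ p, f i p / Real.sqrt ((c * m i) ^ 2 + ‖p‖ ^ 2)) ≤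
      ∑ i, ω i * ∫ p, f i p := by
    simp_rw [← mul_assoc, heq]
    exact Real.sqrt_sq_sub_sq_le
      (Finset.sum_nonneg fun i _ => mul_nonneg (hω i).le (hmass i)) _
  have : Nonempty (Fin N) := ⟨⟨0, hN⟩⟩
  obtain ⟨j, -, hj⟩ := Finset.exists_le_of_sum_mul_le_sum_mul Finset.univ_nonempty
    (fun i _ => hω i) hdom
  refine ⟨j, (le_div_of_mul_le_of_le (hal j) (hlow j) (hmass j) (hup j) hj).trans ?_⟩
  rw [mul_div_assoc]
  exact le_mul_of_one_le_left (div_nonneg ((hmass j).trans (hup j)) (hal j).le) one_le_two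

theorem stmt_5 (N : ℕ) (hN : 1 ≤ N) (c : ℝ) (hc : 0 < c)
    (m ω al au : Fin N → ℝ) (hm : ∀ i, 0 < m i) (hω : ∀ i, 0 < ω i)
    (hal : ∀ i, 0 < al i) (hau : ∀ i, 0 < au i)
    (f : Fin N → EuclideanSpace ℝ (Fin 3) → ℝ)
    (hint : ∀ i, Integrable (f i)) (hnn : ∀ i p, 0 ≤ f i p)
    (hlow : ∀ i, al i ≤ ∫ p, f i p / Real.sqrt ((c * m i) ^ 2 + ‖p‖ ^ 2))
    (hup : ∀ i, (∫ p, f i p) ≤ au i)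
    (Φ : Fin N → ℝ → ℝ)
    (hΦ : ∀ i β, Φ i β =
      (∫ p : EuclideanSpace ℝ (Fin 3),
          Real.exp (-(c * β) * Real.sqrt ((c * m i) ^ 2 + ‖p‖ ^ 2))) /
        ∫ p : EuclideanSpace ℝ (Fin 3),
          Real.exp (-(c * β) * Real.sqrt ((c * m i) ^ 2 + ‖p‖ ^ 2)) /
            Real.sqrt ((c * m i) ^ 2 + ‖p‖ ^ 2))
    (β : ℝ) (hβ : 0 < β)
    (heq : ∑ i, ω i * Φ i β * ∫ p, f i p / Real.sqrt ((c * m i) ^ 2 + ‖p‖ ^ 2) =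
      Real.sqrt ((∑ i, ω i * ∫ p, f i p) ^ 2 -
        ‖∑ i, ω i • ∫ p : EuclideanSpace ℝ (Fin 3),
            (f i p / Real.sqrt ((c * m i) ^ 2 + ‖p‖ ^ 2)) • p‖ ^ 2)) :
    ∃ j, Φ j β ≤ 2 * au j / al j :=
  stmt_5_general N hN c m ω al au hω hal f hnn hlow hup Φ β heq
end

section
/- Let C₃ > 0, let ω ∈ (0,1), and let x ∈ [0,1]. Then ∫₀^∞ (1 − e^{−ω x/s}) e^{−C₃ s} ds ≤ ω + 2ω ln(1/ω) + (ω²/C₃) e^{−C₃/ω}. -/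
/-!
Split `(0, ∞)` at `ω` and `1/ω`. On `(0, ω]` the integrand is at most `1`. Beyond `ω`,
`1 - e^{-y} ≤ y` bounds the integrand by `(ω x / s) e^{-C₃ s}`: on `[ω, 1/ω]` drop the exponential
and integrate `ω / s`, which gives `2 ω log (1/ω)`; on `(1/ω, ∞)` bound `ω x / s` by `ω²` and
integrate the exponential.
-/

open MeasureTheory Real Set

/-- `a` plays the role of `ω x`, `c` of `C₃` and `s` of the momentum component `p¹`. -/
noncomputable def expKernel (a c s : ℝ) : ℝ := (1 - exp (-a / s)) * exp (-c * s)

section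

variable {a c : ℝ}

lemma one_sub_exp_neg_div_nonneg (ha : 0 ≤ a) {s : ℝ} (hs : 0 ≤ s) : 0 ≤ 1 - exp (-a / s) := by
  rw [sub_nonneg, exp_le_one_iff, neg_div]
  exact neg_nonpos.2 (div_nonneg ha hs)

lemma one_sub_exp_neg_div_le_div (a s : ℝ) : 1 - exp (-a / s) ≤ a / s := by
  rw [neg_div]
  linarith [one_sub_le_exp_neg (a / s)]

lemma expKernel_nonneg (ha : 0 ≤ a) {s : ℝ} (hs : 0 ≤ s) : 0 ≤ expKernel a c s :=
  mul_nonneg (one_sub_exp_neg_div_nonneg ha hs) (exp_pos _).le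

lemma expKernel_le_exp (s : ℝ) : expKernel a c s ≤ exp (-c * s) :=
  mul_le_of_le_one_left (exp_pos _).le (by linarith [exp_pos (-a / s)])

lemma expKernel_le_div_mul_exp (s : ℝ) : expKernel a c s ≤ a / s * exp (-c * s) :=
  mul_le_mul_of_nonneg_right (one_sub_exp_neg_div_le_div a s) (exp_pos _).le

lemma integrableOn_expKernel_Ioi (ha : 0 ≤ a) (hc : 0 < c) :
    IntegrableOn (expKernel a c) (Ioi 0) := by
  refine (exp_neg_integrableOn_Ioi 0 hc).mono' (by unfold expKernel; fun_prop) ?_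
  filter_upwards [ae_restrict_mem measurableSet_Ioi] with s hs
  rw [norm_of_nonneg (expKernel_nonneg ha (le_of_lt hs))]
  exact expKernel_le_exp s

lemma intervalIntegrable_expKernel (ha : 0 ≤ a) (hc : 0 < c) {u v : ℝ} (hu : 0 ≤ u)
    (huv : u ≤ v) : IntervalIntegrable (expKernel a c) volume u v :=
  (intervalIntegrable_iff_integrableOn_Ioc_of_le huv).2 <|
    (integrableOn_expKernel_Ioi ha hc).mono_set fun _ hs => lt_of_le_of_lt hu hs.1

lemma integral_expKernel_le_sub (ha : 0 ≤ a) (hc : 0 < c) {u v : ℝ} (hu : 0 ≤ u)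
    (huv : u ≤ v) : ∫ s in u..v, expKernel a c s ≤ v - u := by
  calc ∫ s in u..v, expKernel a c s ≤ ∫ _ in u..v, (1 : ℝ) := by
        refine intervalIntegral.integral_mono_on huv (intervalIntegrable_expKernel ha hc hu huv)
          intervalIntegrable_const fun s hs => (expKernel_le_exp s).trans ?_
        exact exp_le_one_iff.2 (by nlinarith [hu.trans hs.1])
    _ = v - u := by simp

lemma integral_expKernel_le_mul_log (ha : 0 ≤ a) (hc : 0 < c) {u v : ℝ} (hu : 0 < u)
    (huv : u ≤ v) : ∫ s in u..v, expKernel a c s ≤ a * log (v / u) := by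
  have hinv : IntervalIntegrable (fun s => a * s⁻¹) volume u v :=
    (intervalIntegrable_inv_iff.2
      (Or.inr (notMem_uIcc_of_lt hu (hu.trans_le huv)))).const_mul a
  calc ∫ s in u..v, expKernel a c s ≤ ∫ s in u..v, a * s⁻¹ := by
        refine intervalIntegral.integral_mono_on huv
          (intervalIntegrable_expKernel ha hc hu.le huv) hinv fun s hs => ?_
        have hs0 : 0 < s := hu.trans_le hs.1
        calc expKernel a c s ≤ a / s * exp (-c * s) := expKernel_le_div_mul_exp s
          _ ≤ a / s * 1 := by
              gcongr
              exact exp_le_one_iff.2 (by nlinarith)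
          _ = a * s⁻¹ := by ring
    _ = a * log (v / u) := by
        rw [intervalIntegral.integral_const_mul, integral_inv_of_pos hu (hu.trans_le huv)]

lemma setIntegral_expKernel_Ioi_le (ha : 0 ≤ a) (hc : 0 < c) {v : ℝ} (hv : 0 < v) :
    ∫ s in Ioi v, expKernel a c s ≤ a / v * (exp (-c * v) / c) := by
  calc ∫ s in Ioi v, expKernel a c s ≤ ∫ s in Ioi v, a / v * exp (-c * s) := by
        refine setIntegral_mono_on
          ((integrableOn_expKernel_Ioi ha hc).mono_set (Ioi_subset_Ioi hv.le))
          ((exp_neg_integrableOn_Ioi v hc).const_mul _) measurableSet_Ioi fun s hs => ?_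
        calc expKernel a c s ≤ a / s * exp (-c * s) := expKernel_le_div_mul_exp s
          _ ≤ a / v * exp (-c * s) := by
              gcongr
              exact hs.le
    _ = a / v * (exp (-c * v) / c) := by
        rw [integral_const_mul, integral_exp_mul_Ioi (neg_neg_of_pos hc), neg_div_neg_eq]

end

lemma integral_expKernel_le {a c ω : ℝ} (ha : 0 ≤ a) (haω : a ≤ ω) (hc : 0 < c) (hω0 : 0 < ω)
    (hω1 : ω ≤ 1) :
    ∫ s in Ioi 0, expKernel a c s ≤ ω + 2 * ω * log (1 / ω) + ω ^ 2 / c * exp (-c / ω) := by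
  have hω : ω ≤ ω⁻¹ := hω1.trans ((one_le_inv₀ hω0).2 hω1)
  have hI := integrableOn_expKernel_Ioi ha hc
  have hsplit : ∫ s in Ioi 0, expKernel a c s = (∫ s in (0)..ω, expKernel a c s) +
      (∫ s in ω..ω⁻¹, expKernel a c s) + ∫ s in Ioi ω⁻¹, expKernel a c s := by
    rw [add_assoc, intervalIntegral.integral_interval_add_Ioi (hI.mono_set (Ioi_subset_Ioi hω0.le))
      (hI.mono_set (Ioi_subset_Ioi (hω0.le.trans hω))),
      intervalIntegral.integral_interval_add_Ioi hI (hI.mono_set (Ioi_subset_Ioi hω0.le))]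
  have hsmall : ∫ s in (0)..ω, expKernel a c s ≤ ω := by
    simpa using integral_expKernel_le_sub ha hc le_rfl hω0.le
  have hmiddle : ∫ s in ω..ω⁻¹, expKernel a c s ≤ 2 * ω * log (1 / ω) := by
    have hlog : log (ω⁻¹ / ω) = 2 * log (1 / ω) := by
      rw [div_eq_mul_inv, log_mul (inv_ne_zero hω0.ne') (inv_ne_zero hω0.ne'), one_div]
      ring
    have hlog_nonneg : 0 ≤ log (1 / ω) := log_nonneg (by rw [one_div]; exact (one_le_inv₀ hω0).2 hω1)
    calc ∫ s in ω..ω⁻¹, expKernel a c s ≤ a * log (ω⁻¹ / ω) :=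
          integral_expKernel_le_mul_log ha hc hω0 hω
      _ ≤ 2 * ω * log (1 / ω) := by rw [hlog]; nlinarith
  have hlarge : ∫ s in Ioi ω⁻¹, expKernel a c s ≤ ω ^ 2 / c * exp (-c / ω) := by
    calc ∫ s in Ioi ω⁻¹, expKernel a c s ≤ a / ω⁻¹ * (exp (-c * ω⁻¹) / c) :=
          setIntegral_expKernel_Ioi_le ha hc (inv_pos.2 hω0)
      _ = a * ω / c * exp (-c / ω) := by rw [div_inv_eq_mul, ← div_eq_mul_inv]; ring
      _ ≤ ω ^ 2 / c * exp (-c / ω) := by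
          rw [sq]
          gcongr
  linarith

theorem stmt_10 (C3 : ℝ) (hC3 : 0 < C3) (ω : ℝ) (hω : ω ∈ Set.Ioo (0 : ℝ) 1)
    (x : ℝ) (hx : x ∈ Set.Icc (0 : ℝ) 1) :
    (∫ s in Set.Ioi (0 : ℝ), (1 - Real.exp (-(ω * x) / s)) * Real.exp (-C3 * s)) ≤
      ω + 2 * ω * Real.log (1 / ω) + ω ^ 2 / C3 * Real.exp (-C3 / ω) :=
  integral_expKernel_le (mul_nonneg hω.1.le hx.1) (mul_le_of_le_one_right hω.1.le hx.2) hC3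
    hω.1 hω.2.le
end

section
/- Let c, m > 0 and write p⁰ = √((cm)² + |p|²) for p ∈ ℝ³. Let C₁, C₂ > 0. Then there exist constants C, C' > 0, depending only on C₁, C₂, c, m, such that for every measurable J : [0,1] × ℝ³ → ℝ with 0 ≤ J(y,p) ≤ C₁ e^{−C₂ p⁰} for all (y,p), every ω ∈ (0,1), and every x ∈ [0,1]: ∫_{p¹>0} (ω/p¹) ∫₀^x e^{−(ω/p¹)(x−y)} J(y,p) dy dp + ∫_{p¹<0} (ω/|p¹|) ∫_x^1 e^{−(ω/|p¹|)(y−x)} J(y,p) dy dp ≤ C(ω ln(1/ω) + ω + ω² e^{−C'/ω}). -/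
/-!
For fixed `p` with `a = ω / |p¹|`, the time integral is at most `sup J · (1 - e^{-a·len}) ≤
C₁ e^{-C₂ p⁰} · min(a, 1)`. Since `p⁰ ≥ |p| ≥ (|p¹| + |p²| + |p³|) / 3`, the Jüttner weight factors
into one-dimensional exponentials, so the momentum integral of the bound is a product of
one-dimensional integrals. The only singular factor is `∫ e^{-b|t|} min(ω/|t|, 1) dt`, which is
`O(ω)` on `|t| ≤ ω` and on `|t| ≥ 1`, and `ω log(1/ω)` in between.
-/

open MeasureTheory Real Set

lemma integrable_comp_abs_of_integrableOn_Ioi {f : ℝ → ℝ} (hf : IntegrableOn f (Ioi 0)) :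
    Integrable fun x => f |x| := by
  have hpos : IntegrableOn (fun x => f |x|) (Ioi 0) :=
    hf.congr_fun (fun x hx => by rw [abs_of_pos hx]) measurableSet_Ioi
  have hneg : IntegrableOn (fun x => f |x|) (Iic 0) := by
    rw [← Measure.map_neg_eq_self (volume : Measure ℝ)]
    let e : MeasurableEmbedding fun x : ℝ => -x := (Homeomorph.neg ℝ).measurableEmbedding
    rw [e.integrableOn_map_iff]
    simp_rw [Function.comp_def, abs_neg, neg_preimage, neg_Iic, neg_zero]
    exact Iff.mpr integrableOn_Ici_iff_integrableOn_Ioi hpos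
  rw [← integrableOn_univ, ← Iic_union_Ioi (a := (0 : ℝ))]
  exact hneg.union hpos

lemma integral_exp_neg_mul_Ioi {b : ℝ} (hb : 0 < b) (c : ℝ) :
    ∫ t in Ioi c, exp (-b * t) = exp (-b * c) / b := by
  rw [integral_exp_mul_Ioi (neg_lt_zero.mpr hb), neg_div_neg_eq]

lemma integrable_exp_neg_mul_abs {b : ℝ} (hb : 0 < b) : Integrable fun t : ℝ => exp (-b * |t|) :=
  integrable_comp_abs_of_integrableOn_Ioi (f := fun t => exp (-b * t))
    (exp_neg_integrableOn_Ioi 0 hb)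

lemma integral_exp_neg_mul_abs {b : ℝ} (hb : 0 < b) : ∫ t : ℝ, exp (-b * |t|) = 2 / b := by
  rw [integral_comp_abs (f := fun t => exp (-b * t)), integral_exp_neg_mul_Ioi hb, mul_zero,
    exp_zero, mul_one_div]

lemma integrableOn_exp_neg_mul_mul_min_div {b ω : ℝ} (hb : 0 < b) (hω : 0 ≤ ω) :
    IntegrableOn (fun t => exp (-b * t) * min (ω / t) 1) (Ioi 0) := by
  refine (exp_neg_integrableOn_Ioi 0 hb).mono' (by fun_prop) ?_
  filter_upwards [ae_restrict_mem measurableSet_Ioi] with t ht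
  have : 0 ≤ min (ω / t) 1 := le_min (div_nonneg hω (le_of_lt ht)) zero_le_one
  rw [norm_of_nonneg (by positivity)]
  exact mul_le_of_le_one_right (exp_pos _).le (min_le_right _ _)

lemma intervalIntegral_exp_neg_mul_mul_min_div_le {b ω : ℝ} (hb : 0 ≤ b) (hω0 : 0 < ω)
    (hω1 : ω ≤ 1) :
    ∫ t in ω..1, exp (-b * t) * min (ω / t) 1 ≤ ω * log (1 / ω) := by
  have hne : ∀ t ∈ uIcc ω 1, t ≠ 0 := by
    rw [uIcc_of_le hω1]; exact fun t ht => (hω0.trans_le ht.1).ne'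
  calc ∫ t in ω..1, exp (-b * t) * min (ω / t) 1 ≤ ∫ t in ω..1, ω * (1 / t) := by
        refine intervalIntegral.integral_mono_on hω1 ?_
          ((intervalIntegral.intervalIntegrable_one_div hne continuousOn_id).const_mul ω)
          fun t ht => ?_
        · exact ContinuousOn.intervalIntegrable (by fun_prop (disch := exact hne))
        · have ht0 : 0 < t := hω0.trans_le ht.1
          rw [mul_one_div]
          exact (mul_le_mul (exp_le_one_iff.mpr (by nlinarith)) (min_le_left _ _)
            (le_min (by positivity) zero_le_one) zero_le_one).trans_eq (one_mul _)
    _ = ω * log (1 / ω) := by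
        rw [intervalIntegral.integral_const_mul, integral_one_div fun h => hne 0 h rfl]

lemma setIntegral_Ioi_one_exp_neg_mul_mul_min_div_le {b ω : ℝ} (hb : 0 < b) (hω : 0 ≤ ω) :
    ∫ t in Ioi (1 : ℝ), exp (-b * t) * min (ω / t) 1 ≤ ω / b := by
  calc ∫ t in Ioi (1 : ℝ), exp (-b * t) * min (ω / t) 1
      ≤ ∫ t in Ioi (1 : ℝ), ω * exp (-b * t) := by
        refine setIntegral_mono_on
          ((integrableOn_exp_neg_mul_mul_min_div hb hω).mono_set (Ioi_subset_Ioi zero_le_one))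
          ((exp_neg_integrableOn_Ioi 1 hb).const_mul ω) measurableSet_Ioi fun t ht => ?_
        rw [mul_comm ω]
        exact mul_le_mul_of_nonneg_left ((min_le_left _ _).trans (div_le_self hω ht.le))
          (exp_pos _).le
    _ ≤ ω / b := by
        rw [integral_const_mul, integral_exp_neg_mul_Ioi hb, mul_div_assoc']
        gcongr
        exact mul_le_of_le_one_right hω (exp_le_one_iff.mpr (by linarith))

lemma setIntegral_Ioi_zero_exp_neg_mul_mul_min_div_le {b ω : ℝ} (hb : 0 < b) (hω0 : 0 < ω)
    (hω1 : ω ≤ 1) :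
    ∫ t in Ioi (0 : ℝ), exp (-b * t) * min (ω / t) 1 ≤ ω * log (1 / ω) + ω + ω / b := by
  set F : ℝ → ℝ := fun t => exp (-b * t) * min (ω / t) 1
  have hFint : IntegrableOn F (Ioi 0) := integrableOn_exp_neg_mul_mul_min_div hb hω0.le
  have hFii : ∀ u v, 0 ≤ u → u ≤ v → IntervalIntegrable F volume u v := fun u v hu huv =>
    (intervalIntegrable_iff_integrableOn_Ioc_of_le huv).2
      (hFint.mono_set fun t ht => hu.trans_lt ht.1)
  have hsplit : ∫ t in Ioi (0 : ℝ), F t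
      = (∫ t in (0 : ℝ)..ω, F t) + (∫ t in ω..1, F t) + ∫ t in Ioi (1 : ℝ), F t := by
    rw [intervalIntegral.integral_add_adjacent_intervals (hFii 0 ω le_rfl hω0.le)
      (hFii ω 1 hω0.le hω1), intervalIntegral.integral_interval_add_Ioi hFint
      (hFint.mono_set (Ioi_subset_Ioi zero_le_one))]
  have hnear : ∫ t in (0 : ℝ)..ω, F t ≤ ω := by
    simpa using intervalIntegral.integral_mono_on hω0.le (hFii 0 ω le_rfl hω0.le)
      intervalIntegrable_const fun t ht =>
        mul_le_one₀ (exp_le_one_iff.mpr (by nlinarith [ht.1]))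
          (le_min (div_nonneg hω0.le ht.1) zero_le_one) (min_le_right _ _)
  linarith [intervalIntegral_exp_neg_mul_mul_min_div_le hb.le hω0 hω1,
    setIntegral_Ioi_one_exp_neg_mul_mul_min_div_le hb hω0.le]

lemma mul_integral_exp_neg_mul_le {a L : ℝ} (ha : 0 < a) :
    a * ∫ t in (0 : ℝ)..L, exp (-a * t) ≤ min (a * L) 1 := by
  have hval : a * ∫ t in (0 : ℝ)..L, exp (-a * t) = 1 - exp (-(a * L)) := by
    rw [intervalIntegral.integral_comp_mul_left (fun t => exp t) (neg_ne_zero.mpr ha.ne'),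
      integral_exp, mul_zero, exp_zero, smul_eq_mul]
    field_simp
    ring
  rw [hval]
  refine le_min ?_ ?_
  · linarith [add_one_le_exp (-(a * L))]
  · linarith [exp_pos (-(a * L))]

lemma intervalIntegral_mul_le_mul_integral {k K : ℝ → ℝ} {u v M : ℝ} (huv : u ≤ v)
    (hk : Continuous k) (hk0 : ∀ y ∈ Icc u v, 0 ≤ k y) (hK : Measurable K)
    (hK0 : ∀ y ∈ Icc u v, 0 ≤ K y) (hKM : ∀ y ∈ Icc u v, K y ≤ M) :
    ∫ y in u..v, k y * K y ≤ M * ∫ y in u..v, k y := by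
  have hkK : IntervalIntegrable (fun y => k y * K y) volume u v := by
    rw [intervalIntegrable_iff_integrableOn_Icc_of_le huv]
    refine (hk.integrableOn_Icc).mul_bdd hK.aestronglyMeasurable (c := M) ?_
    filter_upwards [ae_restrict_mem measurableSet_Icc] with y hy
    rw [norm_of_nonneg (hK0 y hy)]
    exact hKM y hy
  rw [← intervalIntegral.integral_const_mul]
  refine intervalIntegral.integral_mono_on huv hkK
    ((continuous_const.mul hk).intervalIntegrable u v) fun y hy => ?_
  rw [mul_comm M]
  exact mul_le_mul_of_nonneg_left (hKM y hy) (hk0 y hy)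

lemma mul_integral_exp_neg_mul_sub_left_mul_le {a x M : ℝ} {K : ℝ → ℝ} (ha : 0 < a) (hx : 0 ≤ x)
    (hK : Measurable K) (hK0 : ∀ y ∈ Icc 0 x, 0 ≤ K y) (hKM : ∀ y ∈ Icc 0 x, K y ≤ M) :
    a * ∫ y in (0 : ℝ)..x, exp (-a * (x - y)) * K y ≤ M * min (a * x) 1 := by
  have hM : 0 ≤ M := (hK0 x ⟨hx, le_rfl⟩).trans (hKM x ⟨hx, le_rfl⟩)
  have hshift : ∫ y in (0 : ℝ)..x, exp (-a * (x - y)) = ∫ t in (0 : ℝ)..x, exp (-a * t) := by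
    simpa using intervalIntegral.integral_comp_sub_left (fun t => exp (-a * t)) x (a := 0) (b := x)
  calc a * ∫ y in (0 : ℝ)..x, exp (-a * (x - y)) * K y
      ≤ a * (M * ∫ y in (0 : ℝ)..x, exp (-a * (x - y))) := by
        refine mul_le_mul_of_nonneg_left ?_ ha.le
        exact intervalIntegral_mul_le_mul_integral hx (by fun_prop) (fun _ _ => (exp_pos _).le)
          hK hK0 hKM
    _ = M * (a * ∫ t in (0 : ℝ)..x, exp (-a * t)) := by rw [hshift]; ring
    _ ≤ M * min (a * x) 1 := mul_le_mul_of_nonneg_left (mul_integral_exp_neg_mul_le ha) hM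

lemma mul_integral_exp_neg_mul_sub_right_mul_le {a x z M : ℝ} {K : ℝ → ℝ} (ha : 0 < a) (hxz : x ≤ z)
    (hK : Measurable K) (hK0 : ∀ y ∈ Icc x z, 0 ≤ K y) (hKM : ∀ y ∈ Icc x z, K y ≤ M) :
    a * ∫ y in x..z, exp (-a * (y - x)) * K y ≤ M * min (a * (z - x)) 1 := by
  have hM : 0 ≤ M := (hK0 x ⟨le_rfl, hxz⟩).trans (hKM x ⟨le_rfl, hxz⟩)
  have hshift : ∫ y in x..z, exp (-a * (y - x)) = ∫ t in (0 : ℝ)..(z - x), exp (-a * t) := by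
    simpa using intervalIntegral.integral_comp_sub_right (fun t => exp (-a * t)) x (a := x) (b := z)
  calc a * ∫ y in x..z, exp (-a * (y - x)) * K y
      ≤ a * (M * ∫ y in x..z, exp (-a * (y - x))) := by
        refine mul_le_mul_of_nonneg_left ?_ ha.le
        exact intervalIntegral_mul_le_mul_integral hxz (by fun_prop) (fun _ _ => (exp_pos _).le)
          hK hK0 hKM
    _ = M * (a * ∫ t in (0 : ℝ)..(z - x), exp (-a * t)) := by rw [hshift]; ring
    _ ≤ M * min (a * (z - x)) 1 := mul_le_mul_of_nonneg_left (mul_integral_exp_neg_mul_le ha) hM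

lemma EuclideanSpace.integrable_prod_apply {ι : Type*} [Fintype ι] {g : ι → ℝ → ℝ}
    (hg : ∀ i, Integrable (g i)) :
    Integrable fun p : EuclideanSpace ℝ ι => ∏ i, g i (p i) :=
  (EuclideanSpace.volume_preserving_symm_measurableEquiv_toLp ι).integrable_comp_emb
    (MeasurableEquiv.measurableEmbedding _) |>.2 (Integrable.fintype_prod hg)

lemma EuclideanSpace.integral_prod_apply {ι : Type*} [Fintype ι] (g : ι → ℝ → ℝ) :
    ∫ p : EuclideanSpace ℝ ι, ∏ i, g i (p i) = ∏ i, ∫ t, g i t := by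
  rw [← integral_fintype_prod_volume_eq_prod]
  exact (EuclideanSpace.volume_preserving_symm_measurableEquiv_toLp ι).integral_comp'
    (g := fun q => ∏ i, g i (q i))

lemma EuclideanSpace.integrable_mul_prod_succ {n : ℕ} {f g : ℝ → ℝ} (hf : Integrable f)
    (hg : Integrable g) :
    Integrable fun p : EuclideanSpace ℝ (Fin (n + 1)) => f (p 0) * ∏ i : Fin n, g (p i.succ) := by
  simpa [Fin.prod_univ_succ] using EuclideanSpace.integrable_prod_apply
    (g := Fin.cons f fun _ => g) (Fin.cases (by simpa using hf) fun _ => by simpa using hg)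

lemma EuclideanSpace.integral_mul_prod_succ {n : ℕ} (f g : ℝ → ℝ) :
    ∫ p : EuclideanSpace ℝ (Fin (n + 1)), f (p 0) * ∏ i : Fin n, g (p i.succ)
      = (∫ t, f t) * (∫ t, g t) ^ n := by
  simpa [Fin.prod_univ_succ] using
    EuclideanSpace.integral_prod_apply (Fin.cons f fun _ => g : Fin (n + 1) → ℝ → ℝ)

lemma exp_neg_mul_sqrt_le_prod {ι : Type*} [Fintype ι] {C : ℝ} (hC : 0 ≤ C) (a : ℝ)
    (p : EuclideanSpace ℝ ι) :
    exp (-C * sqrt (a ^ 2 + ‖p‖ ^ 2)) ≤ ∏ i, exp (-(C / Fintype.card ι) * |p i|) := by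
  rw [← exp_sum, exp_le_exp]
  have hnorm : ‖p‖ ≤ sqrt (a ^ 2 + ‖p‖ ^ 2) := le_sqrt_of_sq_le (by nlinarith [sq_nonneg a])
  have hsum : ∑ i, C / Fintype.card ι * |p i| ≤ C * ‖p‖ := by
    calc ∑ i, C / Fintype.card ι * |p i| ≤ ∑ _i : ι, C / Fintype.card ι * ‖p‖ :=
          Finset.sum_le_sum fun i _ =>
            mul_le_mul_of_nonneg_left (PiLp.norm_apply_le p i) (by positivity)
      _ ≤ C * ‖p‖ := by
          rw [Finset.sum_const, Finset.card_univ, nsmul_eq_mul, ← mul_assoc]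
          rcases (Fintype.card ι).eq_zero_or_pos with h | h
          · simp only [h, Nat.cast_zero, div_zero, zero_mul, mul_zero]; positivity
          · rw [mul_div_cancel₀ _ (by positivity)]
  simp only [neg_mul, Finset.sum_neg_distrib, neg_le_neg_iff]
  nlinarith [norm_nonneg p]

noncomputable def duhamelMajorant (C b ω : ℝ) (p : EuclideanSpace ℝ (Fin 3)) : ℝ :=
  C * (exp (-b * |p 0|) * min (ω / |p 0|) 1 * ∏ i : Fin 2, exp (-b * |p i.succ|))

lemma integrable_duhamelMajorant (C : ℝ) {b ω : ℝ} (hb : 0 < b) (hω : 0 ≤ ω) :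
    Integrable (duhamelMajorant C b ω) :=
  (EuclideanSpace.integrable_mul_prod_succ (n := 2)
    (integrable_comp_abs_of_integrableOn_Ioi (integrableOn_exp_neg_mul_mul_min_div hb hω))
    (integrable_exp_neg_mul_abs hb)).const_mul C

lemma integral_duhamelMajorant_le {C b ω : ℝ} (hC : 0 ≤ C) (hb : 0 < b) (hω0 : 0 < ω)
    (hω1 : ω ≤ 1) :
    ∫ p, duhamelMajorant C b ω p ≤ C * (2 / b) ^ 2 * (2 * (ω * log (1 / ω) + ω + ω / b)) := by
  unfold duhamelMajorant
  rw [integral_const_mul, EuclideanSpace.integral_mul_prod_succ (n := 2)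
    (fun t => exp (-b * |t|) * min (ω / |t|) 1) (fun t => exp (-b * |t|)),
    integral_exp_neg_mul_abs hb, integral_comp_abs (f := fun t => exp (-b * t) * min (ω / t) 1)]
  have := setIntegral_Ioi_zero_exp_neg_mul_mul_min_div_le hb hω0 hω1
  have : 0 ≤ C * (2 / b) ^ 2 := by positivity
  nlinarith

lemma le_duhamelMajorant {C C₂ ω : ℝ} (hC : 0 ≤ C) (hC₂ : 0 ≤ C₂) (hω : 0 ≤ ω) (a : ℝ)
    (p : EuclideanSpace ℝ (Fin 3)) :
    C * exp (-C₂ * sqrt (a ^ 2 + ‖p‖ ^ 2)) * min (ω / |p 0|) 1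
      ≤ duhamelMajorant C (C₂ / 3) ω p := by
  have hexp := exp_neg_mul_sqrt_le_prod hC₂ a p
  simp only [Fintype.card_fin, Nat.cast_ofNat, Fin.prod_univ_succ (n := 2)] at hexp
  have : 0 ≤ min (ω / |p 0|) 1 := le_min (by positivity) zero_le_one
  unfold duhamelMajorant
  calc C * exp (-C₂ * sqrt (a ^ 2 + ‖p‖ ^ 2)) * min (ω / |p 0|) 1
      ≤ C * (exp (-(C₂ / 3) * |p 0|) * ∏ i : Fin 2, exp (-(C₂ / 3) * |p i.succ|))
          * min (ω / |p 0|) 1 := by gcongr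
    _ = _ := by ring

lemma setIntegral_le_integral_of_le {α : Type*} [MeasurableSpace α] {μ : Measure α} {s : Set α}
    {f H : α → ℝ} (hs : MeasurableSet s) (hH : Integrable H μ) (hH0 : 0 ≤ H)
    (hf0 : ∀ x ∈ s, 0 ≤ f x) (hfH : ∀ x ∈ s, f x ≤ H x) :
    ∫ x in s, f x ∂μ ≤ ∫ x, H x ∂μ :=
  (integral_mono_of_nonneg (ae_restrict_of_forall_mem hs hf0) hH.integrableOn
    (ae_restrict_of_forall_mem hs hfH)).trans (setIntegral_le_integral hH (ae_of_all _ hH0))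

section HalfSpace

variable {ι : Type*} {i : ι} {J : ℝ → EuclideanSpace ℝ ι → ℝ}
  {M H : EuclideanSpace ℝ ι → ℝ} {ω x : ℝ}

lemma nonneg_of_le_majorant (hJ : ∀ y ∈ Icc (0 : ℝ) 1, ∀ p, 0 ≤ J y p ∧ J y p ≤ M p)
    (hMH : ∀ p, M p * min (ω / |p i|) 1 ≤ H p) (hω : 0 ≤ ω) : 0 ≤ H := fun p =>
  (mul_nonneg ((hJ 0 ⟨le_rfl, zero_le_one⟩ p).1.trans (hJ 0 ⟨le_rfl, zero_le_one⟩ p).2)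
    (le_min (by positivity) zero_le_one)).trans (hMH p)

lemma setIntegral_duhamel_pos_le [Fintype ι] (hJm : ∀ p, Measurable fun y => J y p)
    (hJ : ∀ y ∈ Icc (0 : ℝ) 1, ∀ p, 0 ≤ J y p ∧ J y p ≤ M p)
    (hMH : ∀ p, M p * min (ω / |p i|) 1 ≤ H p) (hH : Integrable H) (hω : 0 < ω)
    (hx : x ∈ Icc (0 : ℝ) 1) :
    ∫ p in {p : EuclideanSpace ℝ ι | 0 < p i},
        (ω / p i) * ∫ y in (0 : ℝ)..x, exp (-(ω / p i) * (x - y)) * J y p ≤ ∫ p, H p := by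
  have hJx : ∀ p, ∀ y ∈ Icc 0 x, 0 ≤ J y p ∧ J y p ≤ M p := fun p y hy =>
    hJ y ⟨hy.1, hy.2.trans hx.2⟩ p
  refine setIntegral_le_integral_of_le (measurableSet_lt measurable_const (by fun_prop)) hH
    (nonneg_of_le_majorant hJ hMH hω.le) (fun p hp => ?_) (fun p hp => ?_)
  · exact mul_nonneg (div_pos hω hp).le (intervalIntegral.integral_nonneg hx.1 fun y hy =>
      mul_nonneg (exp_pos _).le (hJx p y hy).1)
  · have ha : 0 < ω / p i := div_pos hω hp
    calc _ ≤ M p * min (ω / p i * x) 1 :=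
          mul_integral_exp_neg_mul_sub_left_mul_le ha hx.1 (hJm p)
            (fun y hy => (hJx p y hy).1) (fun y hy => (hJx p y hy).2)
      _ ≤ M p * min (ω / |p i|) 1 := by
          have hM : 0 ≤ M p := (hJx p 0 ⟨le_rfl, hx.1⟩).1.trans (hJx p 0 ⟨le_rfl, hx.1⟩).2
          rw [abs_of_pos hp]
          gcongr
          exact mul_le_of_le_one_right ha.le hx.2
      _ ≤ H p := hMH p

lemma setIntegral_duhamel_neg_le [Fintype ι] (hJm : ∀ p, Measurable fun y => J y p)
    (hJ : ∀ y ∈ Icc (0 : ℝ) 1, ∀ p, 0 ≤ J y p ∧ J y p ≤ M p)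
    (hMH : ∀ p, M p * min (ω / |p i|) 1 ≤ H p) (hH : Integrable H) (hω : 0 < ω)
    (hx : x ∈ Icc (0 : ℝ) 1) :
    ∫ p in {p : EuclideanSpace ℝ ι | p i < 0},
        (ω / |p i|) * ∫ y in x..(1 : ℝ), exp (-(ω / |p i|) * (y - x)) * J y p ≤ ∫ p, H p := by
  have hJx : ∀ p, ∀ y ∈ Icc x 1, 0 ≤ J y p ∧ J y p ≤ M p := fun p y hy =>
    hJ y ⟨hx.1.trans hy.1, hy.2⟩ p
  refine setIntegral_le_integral_of_le (measurableSet_lt (by fun_prop) measurable_const) hH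
    (nonneg_of_le_majorant hJ hMH hω.le) (fun p hp => ?_) (fun p hp => ?_)
  · exact mul_nonneg (by positivity) (intervalIntegral.integral_nonneg hx.2 fun y hy =>
      mul_nonneg (exp_pos _).le (hJx p y hy).1)
  · have ha : 0 < ω / |p i| := div_pos hω (abs_pos.mpr hp.ne)
    calc _ ≤ M p * min (ω / |p i| * (1 - x)) 1 :=
          mul_integral_exp_neg_mul_sub_right_mul_le ha hx.2 (hJm p)
            (fun y hy => (hJx p y hy).1) (fun y hy => (hJx p y hy).2)
      _ ≤ M p * min (ω / |p i|) 1 := by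
          have hM : 0 ≤ M p := (hJx p x ⟨le_rfl, hx.2⟩).1.trans (hJx p x ⟨le_rfl, hx.2⟩).2
          gcongr
          exact mul_le_of_le_one_right ha.le (by linarith [hx.1])
      _ ≤ H p := hMH p

end HalfSpace

theorem stmt_11_general (c m C1 C2 : ℝ)
    (hC1 : 0 < C1) (hC2 : 0 < C2) :
    ∃ C > 0, ∃ C' > 0, ∀ J : ℝ → EuclideanSpace ℝ (Fin 3) → ℝ,
      Measurable (fun q : ℝ × EuclideanSpace ℝ (Fin 3) => J q.1 q.2) →
      (∀ y ∈ Set.Icc (0 : ℝ) 1, ∀ p : EuclideanSpace ℝ (Fin 3),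
        0 ≤ J y p ∧ J y p ≤ C1 * Real.exp (-C2 * Real.sqrt ((c * m) ^ 2 + ‖p‖ ^ 2))) →
      ∀ ω ∈ Set.Ioo (0 : ℝ) 1, ∀ x ∈ Set.Icc (0 : ℝ) 1,
        (∫ p in {p : EuclideanSpace ℝ (Fin 3) | 0 < p 0},
            (ω / p 0) * ∫ y in (0 : ℝ)..x, Real.exp (-(ω / p 0) * (x - y)) * J y p) +
        (∫ p in {p : EuclideanSpace ℝ (Fin 3) | p 0 < 0},
            (ω / |p 0|) * ∫ y in x..(1 : ℝ), Real.exp (-(ω / |p 0|) * (y - x)) * J y p) ≤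
        C * (ω * Real.log (1 / ω) + ω + ω ^ 2 * Real.exp (-C' / ω)) := by
  set b := C2 / 3
  have hb : 0 < b := by positivity
  refine ⟨4 * C1 * (2 / b) ^ 2 * (1 + 1 / b), by positivity, 1, one_pos, ?_⟩
  rintro J hJm hJ ω ⟨hω0, hω1⟩ x hx
  have hJy : ∀ p, Measurable fun y => J y p := fun p =>
    hJm.comp (measurable_id.prodMk measurable_const)
  have hH := integrable_duhamelMajorant C1 hb hω0.le
  have hMH := le_duhamelMajorant hC1.le hC2.le hω0.le (c * m)
  have hpos := setIntegral_duhamel_pos_le hJy hJ hMH hH hω0 hx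
  have hneg := setIntegral_duhamel_neg_le hJy hJ hMH hH hω0 hx
  have hint := integral_duhamelMajorant_le hC1.le hb hω0 hω1.le
  have hlog : 0 ≤ ω * log (1 / ω) := mul_nonneg hω0.le (log_nonneg (one_le_one_div hω0 hω1.le))
  calc _ ≤ 2 * ∫ p, duhamelMajorant C1 b ω p := by linarith
    _ ≤ 4 * C1 * (2 / b) ^ 2 * (ω * log (1 / ω) + ω + ω / b) := by linarith
    _ ≤ 4 * C1 * (2 / b) ^ 2 * ((1 + 1 / b) * (ω * log (1 / ω) + ω)) := by
        gcongr
        have : 0 ≤ ω * log (1 / ω) / b := div_nonneg hlog hb.le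
        linarith [show (1 + 1 / b) * (ω * log (1 / ω) + ω)
          = ω * log (1 / ω) + ω + ω * log (1 / ω) / b + ω / b by ring]
    _ ≤ _ := by
        rw [← mul_assoc]
        refine mul_le_mul_of_nonneg_left ?_ (by positivity)
        linarith [show 0 ≤ ω ^ 2 * exp (-1 / ω) by positivity]

theorem stmt_11 (c m C1 C2 : ℝ) (hc : 0 < c) (hm : 0 < m)
    (hC1 : 0 < C1) (hC2 : 0 < C2) :
    ∃ C > 0, ∃ C' > 0, ∀ J : ℝ → EuclideanSpace ℝ (Fin 3) → ℝ,
      Measurable (fun q : ℝ × EuclideanSpace ℝ (Fin 3) => J q.1 q.2) →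
      (∀ y ∈ Set.Icc (0 : ℝ) 1, ∀ p : EuclideanSpace ℝ (Fin 3),
        0 ≤ J y p ∧ J y p ≤ C1 * Real.exp (-C2 * Real.sqrt ((c * m) ^ 2 + ‖p‖ ^ 2))) →
      ∀ ω ∈ Set.Ioo (0 : ℝ) 1, ∀ x ∈ Set.Icc (0 : ℝ) 1,
        (∫ p in {p : EuclideanSpace ℝ (Fin 3) | 0 < p 0},
            (ω / p 0) * ∫ y in (0 : ℝ)..x, Real.exp (-(ω / p 0) * (x - y)) * J y p) +
        (∫ p in {p : EuclideanSpace ℝ (Fin 3) | p 0 < 0},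
            (ω / |p 0|) * ∫ y in x..(1 : ℝ), Real.exp (-(ω / |p 0|) * (y - x)) * J y p) ≤
        C * (ω * Real.log (1 / ω) + ω + ω ^ 2 * Real.exp (-C' / ω)) :=
  stmt_11_general c m C1 C2 hC1 hC2
end

section
/- Let c, m > 0 and write p⁰ = √((cm)² + |p|²) for p ∈ ℝ³. Let f_L, f_R : ℝ³ → [0,∞) be integrable, set f_LR(p) = f_L(p)·1_{p¹>0} + f_R(p)·1_{p¹<0}, a_ℓ = (1/4)∫ f_LR(p)/p⁰ dp, a_u = 2∫ f_LR(p) dp, and assume a_ℓ > 0. Let C₁, C₂ > 0. Then there exists ε > 0 such that for every ω ∈ (0, ε) and every measurable J : [0,1]×ℝ³ → ℝ with 0 ≤ J(y,p) ≤ C₁ e^{−C₂ p⁰}, the function Ψ(x,p) = (e^{−(ω/|p¹|)x} f_L(p) + (ω/|p¹|)∫₀^x e^{−(ω/|p¹|)(x−y)} J(y,p) dy)·1_{p¹>0} + (e^{−(ω/|p¹|)(1−x)} f_R(p) + (ω/|p¹|)∫_x^1 e^{−(ω/|p¹|)(y−x)} J(y,p) dy)·1_{p¹<0} satisfies, for every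 x ∈ [0,1]: Ψ(x,·) ≥ 0, ∫ Ψ(x,p)/p⁰ dp ≥ a_ℓ, and ∫ Ψ(x,p) dp ≤ a_u. -/
/-!
Pointwise, the Duhamel formula gives
`e^{-ω/|p¹|} f_LR ≤ Ψ(x,·) ≤ f_LR + min(1, ω/|p¹|) C₁e^{-C₂p⁰}`: the lower bound drops the
(nonnegative) source term, the upper one bounds it by `K ∫ e^{-K(x-y)} dy ≤ min(1, K)` with
`K = ω/|p¹|`. As `ω → 0⁺` both bounds converge to the free-streaming data `f_LR`, dominated
by integrable functions, so their moments tend to `4 a_ℓ` and `a_u / 2`. Since `a_ℓ > 0`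
(hence also `∫ f_LR > 0`), the required moment bounds hold for all small `ω`, uniformly in the
source `J` and in `x`.
-/

open MeasureTheory Real Filter Set Topology
open scoped Nat

section ExpDecay

variable {E : Type*} [NormedAddCommGroup E] [MeasurableSpace E] [BorelSpace E]
  [SecondCountableTopology E] {μ : Measure E} [μ.HasTemperateGrowth]

theorem integrable_exp_neg_mul_norm {a : ℝ} (ha : 0 < a) :
    Integrable (fun x : E => exp (-(a * ‖x‖))) μ := by
  set N := μ.integrablePower
  have hdecay : ∀ x : E, ‖x‖ ^ (0 + N) * ‖exp (-(a * ‖x‖))‖ ≤ N ! / a ^ N := by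
    intro x
    have h := pow_div_factorial_le_exp _ (mul_nonneg ha.le (norm_nonneg x)) N
    rw [norm_of_nonneg (exp_nonneg _), zero_add, exp_neg, ← div_eq_mul_inv,
      div_le_div_iff₀ (exp_pos _) (by positivity)]
    rw [div_le_iff₀ (by positivity), mul_pow] at h
    linarith
  simpa using integrable_of_le_of_pow_mul_le (k := 0)
    (fun x => (norm_of_nonneg (exp_nonneg _)).trans_le
      (exp_le_one_iff.2 (neg_nonpos.2 (by positivity))))
    hdecay (by fun_prop)

theorem integrable_exp_neg_mul_sqrt_add_sq {a : ℝ} (ha : 0 < a) (κ : ℝ) :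
    Integrable (fun x : E => exp (-a * √(κ ^ 2 + ‖x‖ ^ 2))) μ := by
  refine (integrable_exp_neg_mul_norm ha).mono' (by fun_prop) (ae_of_all _ fun x => ?_)
  rw [norm_of_nonneg (exp_nonneg _), exp_le_exp, neg_mul, neg_le_neg_iff]
  gcongr
  exact le_sqrt_of_sq_le (by nlinarith [sq_nonneg κ])

end ExpDecay

theorem MeasureTheory.Integrable.div_sqrt_sq_add_norm_sq_s13 {E : Type*} [NormedAddCommGroup E]
    [MeasurableSpace E] [OpensMeasurableSpace E] {μ : Measure E} {f : E → ℝ}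
    (hf : Integrable f μ) {κ : ℝ} (hκ : κ ≠ 0) :
    Integrable (fun p => f p / √(κ ^ 2 + ‖p‖ ^ 2)) μ := by
  simp only [div_eq_mul_inv]
  refine hf.mul_bdd (c := |κ|⁻¹) (by fun_prop : Measurable _).aestronglyMeasurable
    (ae_of_all _ fun p => ?_)
  have hle : |κ| ≤ √(κ ^ 2 + ‖p‖ ^ 2) := by
    rw [← sqrt_sq_eq_abs]; gcongr; nlinarith [sq_nonneg ‖p‖]
  rw [norm_inv, norm_of_nonneg (sqrt_nonneg _)]
  exact inv_anti₀ (abs_pos.2 hκ) hle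

section Integrals

variable {α : Type*} [MeasurableSpace α] {μ : Measure α}

theorem tendsto_integral_mul_of_abs_le_one {ι : Type*} {l : Filter ι} [l.IsCountablyGenerated]
    {k : ι → α → ℝ} {k₀ h : α → ℝ} (hh : Integrable h μ)
    (hk_meas : ∀ᶠ i in l, AEStronglyMeasurable (k i) μ) (hk_le : ∀ᶠ i in l, ∀ p, |k i p| ≤ 1)
    (hk : ∀ p, Tendsto (fun i => k i p) l (𝓝 (k₀ p))) :
    Tendsto (fun i => ∫ p, k i p * h p ∂μ) l (𝓝 (∫ p, k₀ p * h p ∂μ)) := by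
  refine tendsto_integral_filter_of_dominated_convergence (fun p => ‖h p‖)
    (hk_meas.mono fun i hi => hi.mul hh.aestronglyMeasurable) ?_ hh.norm
    (ae_of_all _ fun p => (hk p).mul_const (h p))
  filter_upwards [hk_le] with i hi
  refine ae_of_all _ fun p => ?_
  rw [norm_mul, norm_eq_abs (k i p)]
  exact mul_le_of_le_one_left (norm_nonneg _) (hi p)

theorem integral_pos_of_integral_div_pos {f ρ : α → ℝ} (hf : Integrable f μ) (hf_nonneg : 0 ≤ f)
    (h : 0 < ∫ p, f p / ρ p ∂μ) : 0 < ∫ p, f p ∂μ := by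
  refine (integral_nonneg hf_nonneg).lt_of_ne' fun h0 => h.ne' ?_
  have hf0 : f =ᵐ[μ] 0 := (integral_eq_zero_iff_of_nonneg hf_nonneg hf).1 h0
  exact integral_eq_zero_of_ae (hf0.mono fun p hp => by simp [hp])

theorem MeasureTheory.StronglyMeasurable.intervalIntegral_right {F : α → ℝ → ℝ}
    (hF : StronglyMeasurable (Function.uncurry F)) (a b : ℝ) :
    StronglyMeasurable fun p => ∫ y in a..b, F p y :=
  hF.integral_prod_right.sub hF.integral_prod_right

end Integrals

section Duhamel

theorem integral_exp_neg_mul_sub {K : ℝ} (hK : K ≠ 0) (a b : ℝ) :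
    ∫ y in a..b, exp (-K * (b - y)) = (1 - exp (-K * (b - a))) / K := by
  have h := intervalIntegral.integral_comp_mul_sub (a := a) (b := b) (fun t => exp t) hK (K * b)
  simp only [integral_exp, smul_eq_mul, sub_self, exp_zero] at h
  calc ∫ y in a..b, exp (-K * (b - y)) = ∫ y in a..b, exp (K * y - K * b) := by
        congr with y; ring_nf
    _ = (1 - exp (-K * (b - a))) / K := by
        rw [h, inv_mul_eq_div]; ring_nf

theorem one_sub_exp_neg_le_min (t : ℝ) : 1 - exp (-t) ≤ min 1 t :=
  le_min (by linarith [exp_pos (-t)]) (by linarith [add_one_le_exp (-t)])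

variable {K a b B : ℝ} {g : ℝ → ℝ}

theorem mul_integral_exp_neg_mul_sub_mul_le (hK : 0 < K) (hab : a ≤ b) (hg : Measurable g)
    (hg_bound : ∀ y ∈ Icc a b, 0 ≤ g y ∧ g y ≤ B) :
    K * ∫ y in a..b, exp (-K * (b - y)) * g y ≤ min 1 (K * (b - a)) * B := by
  have hint : IntervalIntegrable (fun y => exp (-K * (b - y)) * g y) volume a b := by
    refine (intervalIntegrable_iff_integrableOn_Icc_of_le hab).2 ?_
    refine Measure.integrableOn_of_bounded (M := B) measure_Icc_lt_top.ne (by fun_prop) ?_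
    rw [ae_restrict_iff' measurableSet_Icc]
    refine ae_of_all _ fun y hy => ?_
    have hexp : exp (-K * (b - y)) ≤ 1 := exp_le_one_iff.2 (by nlinarith [hy.2])
    rw [norm_of_nonneg (mul_nonneg (exp_nonneg _) (hg_bound y hy).1)]
    calc exp (-K * (b - y)) * g y ≤ 1 * B :=
          mul_le_mul hexp (hg_bound y hy).2 (hg_bound y hy).1 zero_le_one
      _ = B := one_mul B
  have hmono : ∫ y in a..b, exp (-K * (b - y)) * g y ≤ ∫ y in a..b, exp (-K * (b - y)) * B :=
    intervalIntegral.integral_mono_on hab hint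
      ((by fun_prop : Continuous _).intervalIntegrable _ _) fun y hy =>
      mul_le_mul_of_nonneg_left (hg_bound y hy).2 (exp_nonneg _)
  calc K * ∫ y in a..b, exp (-K * (b - y)) * g y
      ≤ K * ∫ y in a..b, exp (-K * (b - y)) * B := by gcongr
    _ = (1 - exp (-(K * (b - a)))) * B := by
      rw [intervalIntegral.integral_mul_const, integral_exp_neg_mul_sub hK.ne', neg_mul]
      field_simp
    _ ≤ min 1 (K * (b - a)) * B := by
      gcongr
      · exact ((hg_bound a ⟨le_rfl, hab⟩).1).trans (hg_bound a ⟨le_rfl, hab⟩).2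
      · exact one_sub_exp_neg_le_min _

theorem mul_integral_exp_neg_mul_sub_mul_le' (hK : 0 < K) (hab : a ≤ b) (hg : Measurable g)
    (hg_bound : ∀ y ∈ Icc a b, 0 ≤ g y ∧ g y ≤ B) :
    K * ∫ y in a..b, exp (-K * (y - a)) * g y ≤ min 1 (K * (b - a)) * B := by
  have h := mul_integral_exp_neg_mul_sub_mul_le (g := fun z => g (-z)) hK (neg_le_neg hab)
    (hg.comp measurable_neg) fun z hz => hg_bound (-z) ⟨le_neg.1 hz.2, neg_le.1 hz.1⟩
  rw [← intervalIntegral.integral_comp_neg] at h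
  simpa only [neg_neg, sub_neg_eq_add, neg_add_eq_sub] using h

end Duhamel

noncomputable section Slab

variable {α : Type*}

/-- `v p` plays the role of the velocity component `p¹`; `slabSolution v ω fL fR J` is `Ψ`. -/
def inflowData (v fL fR : α → ℝ) (p : α) : ℝ :=
  (if 0 < v p then fL p else 0) + (if v p < 0 then fR p else 0)

def slabSolution (v : α → ℝ) (ω : ℝ) (fL fR : α → ℝ) (J : ℝ → α → ℝ) (x : ℝ) (p : α) : ℝ :=
  (if 0 < v p then
    exp (-(ω / |v p|) * x) * fL p +
      (ω / |v p|) * ∫ y in (0 : ℝ)..x, exp (-(ω / |v p|) * (x - y)) * J y p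
  else 0) +
  (if v p < 0 then
    exp (-(ω / |v p|) * (1 - x)) * fR p +
      (ω / |v p|) * ∫ y in x..(1 : ℝ), exp (-(ω / |v p|) * (y - x)) * J y p
  else 0)

variable {v fL fR B : α → ℝ} {J : ℝ → α → ℝ} {ω x : ℝ}

theorem inflowData_nonneg (hL : ∀ p, 0 ≤ fL p) (hR : ∀ p, 0 ≤ fR p) (p : α) :
    0 ≤ inflowData v fL fR p := by
  unfold inflowData
  split_ifs <;> linarith [hL p, hR p]

theorem exp_neg_mul_inflowData_le_slabSolution {p : α} (hω : 0 ≤ ω) (hx : x ∈ Icc (0 : ℝ) 1)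
    (hL : 0 ≤ fL p) (hR : 0 ≤ fR p) (hJ : ∀ y ∈ Icc (0 : ℝ) 1, 0 ≤ J y p) :
    exp (-(ω / |v p|)) * inflowData v fL fR p ≤ slabSolution v ω fL fR J x p := by
  set K := ω / |v p|
  have hK : 0 ≤ K := by positivity
  have hleft : 0 ≤ ∫ y in (0 : ℝ)..x, exp (-K * (x - y)) * J y p :=
    intervalIntegral.integral_nonneg hx.1 fun y hy =>
      mul_nonneg (exp_nonneg _) (hJ y ⟨hy.1, hy.2.trans hx.2⟩)
  have hright : 0 ≤ ∫ y in x..(1 : ℝ), exp (-K * (y - x)) * J y p :=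
    intervalIntegral.integral_nonneg hx.2 fun y hy =>
      mul_nonneg (exp_nonneg _) (hJ y ⟨hx.1.trans hy.1, hy.2⟩)
  have hexpL : exp (-K) ≤ exp (-K * x) := exp_le_exp.2 (by nlinarith [hx.2])
  have hexpR : exp (-K) ≤ exp (-K * (1 - x)) := exp_le_exp.2 (by nlinarith [hx.1])
  unfold slabSolution inflowData
  split_ifs with hpos hneg hneg
  · linarith
  · nlinarith [mul_le_mul_of_nonneg_right hexpL hL, mul_nonneg hK hleft]
  · nlinarith [mul_le_mul_of_nonneg_right hexpR hR, mul_nonneg hK hright]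
  · simp

theorem slabSolution_nonneg (hω : 0 ≤ ω) (hx : x ∈ Icc (0 : ℝ) 1) (hL : ∀ p, 0 ≤ fL p)
    (hR : ∀ p, 0 ≤ fR p) (hJ : ∀ y ∈ Icc (0 : ℝ) 1, ∀ p, 0 ≤ J y p) (p : α) :
    0 ≤ slabSolution v ω fL fR J x p :=
  (mul_nonneg (exp_nonneg _) (inflowData_nonneg hL hR p)).trans
    (exp_neg_mul_inflowData_le_slabSolution hω hx (hL p) (hR p) fun y hy => hJ y hy p)

theorem slabSolution_le_inflowData_add {p : α} (hω : 0 < ω) (hx : x ∈ Icc (0 : ℝ) 1)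
    (hL : 0 ≤ fL p) (hR : 0 ≤ fR p) (hJm : Measurable fun y => J y p)
    (hJ : ∀ y ∈ Icc (0 : ℝ) 1, 0 ≤ J y p ∧ J y p ≤ B p) :
    slabSolution v ω fL fR J x p ≤ inflowData v fL fR p + min 1 (ω / |v p|) * B p := by
  have hB : 0 ≤ B p := (hJ 0 ⟨le_rfl, zero_le_one⟩).1.trans (hJ 0 ⟨le_rfl, zero_le_one⟩).2
  set K := ω / |v p|
  have hK : 0 ≤ K := by positivity
  have hmin : ∀ t ≤ 1, min 1 (K * t) * B p ≤ min 1 K * B p := fun t ht => by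
    gcongr; nlinarith
  have hexpL : exp (-K * x) ≤ 1 := exp_le_one_iff.2 (by nlinarith [hx.1])
  have hexpR : exp (-K * (1 - x)) ≤ 1 := exp_le_one_iff.2 (by nlinarith [hx.2])
  unfold slabSolution inflowData
  split_ifs with hpos hneg hneg
  · linarith
  · have hduhamel := mul_integral_exp_neg_mul_sub_mul_le (div_pos hω (abs_pos.2 hpos.ne'))
      hx.1 hJm fun y hy => hJ y ⟨hy.1, hy.2.trans hx.2⟩
    nlinarith [mul_le_of_le_one_left hL hexpL, hmin (x - 0) (by linarith [hx.2])]
  · have hduhamel := mul_integral_exp_neg_mul_sub_mul_le' (div_pos hω (abs_pos.2 hneg.ne))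
      hx.2 hJm fun y hy => hJ y ⟨hx.1.trans hy.1, hy.2⟩
    nlinarith [mul_le_of_le_one_left hR hexpR, hmin (1 - x) (by linarith [hx.1])]
  · simp only [add_zero]
    positivity

section Measurability

variable [MeasurableSpace α] {μ : Measure α}

theorem integrable_inflowData (hv : Measurable v) (hfL : Integrable fL μ)
    (hfR : Integrable fR μ) : Integrable (inflowData v fL fR) μ :=
  (Integrable.piecewise (s := {p | 0 < v p}) (measurableSet_lt measurable_const hv)
      hfL.integrableOn integrableOn_zero).add
    (Integrable.piecewise (s := {p | v p < 0}) (measurableSet_lt hv measurable_const)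
      hfR.integrableOn integrableOn_zero)

theorem aestronglyMeasurable_slabSolution (hv : Measurable v)
    (hfL : AEStronglyMeasurable fL μ) (hfR : AEStronglyMeasurable fR μ)
    (hJm : Measurable fun q : ℝ × α => J q.1 q.2) (ω x : ℝ) :
    AEStronglyMeasurable (slabSolution v ω fL fR J x) μ := by
  have hJm' : Measurable fun q : α × ℝ => J q.2 q.1 := hJm.comp measurable_swap
  have hK : Measurable fun p => ω / |v p| := by fun_prop
  have hleft := StronglyMeasurable.intervalIntegral_right
    (F := fun p y => exp (-(ω / |v p|) * (x - y)) * J y p) (by fun_prop) 0 x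
  have hright := StronglyMeasurable.intervalIntegral_right
    (F := fun p y => exp (-(ω / |v p|) * (y - x)) * J y p) (by fun_prop) x 1
  refine .add (.piecewise (s := {p | 0 < v p}) (measurableSet_lt measurable_const hv) ?_
    aestronglyMeasurable_const) (.piecewise (s := {p | v p < 0})
    (measurableSet_lt hv measurable_const) ?_ aestronglyMeasurable_const)
  · have hexp : Measurable fun p => exp (-(ω / |v p|) * x) := by fun_prop
    exact ((hexp.aestronglyMeasurable.mul hfL).add
      (hK.aestronglyMeasurable.mul hleft.aestronglyMeasurable)).restrict
  · have hexp : Measurable fun p => exp (-(ω / |v p|) * (1 - x)) := by fun_prop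
    exact ((hexp.aestronglyMeasurable.mul hfR).add
      (hK.aestronglyMeasurable.mul hright.aestronglyMeasurable)).restrict

theorem integrable_slabSolution (hv : Measurable v) (hfL : Integrable fL μ)
    (hfR : Integrable fR μ) (hL : ∀ p, 0 ≤ fL p) (hR : ∀ p, 0 ≤ fR p) (hω : 0 < ω)
    (hx : x ∈ Icc (0 : ℝ) 1) (hJm : Measurable fun q : ℝ × α => J q.1 q.2)
    (hJ : ∀ y ∈ Icc (0 : ℝ) 1, ∀ p, 0 ≤ J y p ∧ J y p ≤ B p) (hB : Integrable B μ) :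
    Integrable (slabSolution v ω fL fR J x) μ := by
  refine ((integrable_inflowData hv hfL hfR).add hB).mono'
    (aestronglyMeasurable_slabSolution hv hfL.1 hfR.1 hJm ω x) (ae_of_all _ fun p => ?_)
  have hB : 0 ≤ B p := (hJ 0 ⟨le_rfl, zero_le_one⟩ p).1.trans (hJ 0 ⟨le_rfl, zero_le_one⟩ p).2
  rw [norm_of_nonneg (slabSolution_nonneg hω.le hx hL hR (fun y hy p => (hJ y hy p).1) p)]
  refine (slabSolution_le_inflowData_add hω hx (hL p) (hR p) hJm.of_uncurry_right
    fun y hy => hJ y hy p).trans ?_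
  exact add_le_add_right (mul_le_of_le_one_left hB (min_le_left _ _)) _

theorem integral_exp_neg_mul_inflowData_div_le {ρ : α → ℝ} (hρ : ∀ p, 0 ≤ ρ p) (hω : 0 ≤ ω)
    (hx : x ∈ Icc (0 : ℝ) 1) (hL : ∀ p, 0 ≤ fL p) (hR : ∀ p, 0 ≤ fR p)
    (hJ : ∀ y ∈ Icc (0 : ℝ) 1, ∀ p, 0 ≤ J y p)
    (hint : Integrable (fun p => slabSolution v ω fL fR J x p / ρ p) μ) :
    ∫ p, exp (-(ω / |v p|)) * (inflowData v fL fR p / ρ p) ∂μ ≤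
      ∫ p, slabSolution v ω fL fR J x p / ρ p ∂μ := by
  refine integral_mono_of_nonneg (ae_of_all _ fun p => ?_) hint (ae_of_all _ fun p => ?_)
  · exact mul_nonneg (exp_nonneg _) (div_nonneg (inflowData_nonneg hL hR p) (hρ p))
  · dsimp only
    rw [← mul_div_assoc]
    exact div_le_div_of_nonneg_right (exp_neg_mul_inflowData_le_slabSolution hω hx (hL p) (hR p)
      fun y hy => hJ y hy p) (hρ p)

theorem integral_slabSolution_le (hv : Measurable v) (hfL : Integrable fL μ)
    (hfR : Integrable fR μ) (hL : ∀ p, 0 ≤ fL p) (hR : ∀ p, 0 ≤ fR p) (hω : 0 < ω)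
    (hx : x ∈ Icc (0 : ℝ) 1) (hJm : Measurable fun q : ℝ × α => J q.1 q.2)
    (hJ : ∀ y ∈ Icc (0 : ℝ) 1, ∀ p, 0 ≤ J y p ∧ J y p ≤ B p) (hB : Integrable B μ) :
    ∫ p, slabSolution v ω fL fR J x p ∂μ ≤
      ∫ p, inflowData v fL fR p ∂μ + ∫ p, min 1 (ω / |v p|) * B p ∂μ := by
  have hminB : Integrable (fun p => min 1 (ω / |v p|) * B p) μ :=
    hB.bdd_mul (c := 1) (by fun_prop : Measurable fun p => min 1 (ω / |v p|)).aestronglyMeasurable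
      (ae_of_all _ fun p => by rw [norm_of_nonneg (by positivity)]; exact min_le_left _ _)
  rw [← integral_add (integrable_inflowData hv hfL hfR) hminB]
  exact integral_mono_of_nonneg
    (ae_of_all _ (slabSolution_nonneg hω.le hx hL hR fun y hy p => (hJ y hy p).1))
    ((integrable_inflowData hv hfL hfR).add hminB) (ae_of_all _ fun p =>
      slabSolution_le_inflowData_add hω hx (hL p) (hR p) hJm.of_uncurry_right
        fun y hy => hJ y hy p)

theorem tendsto_integral_exp_neg_div_abs_mul (hv : Measurable v) {h : α → ℝ}
    (hh : Integrable h μ) :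
    Tendsto (fun ω => ∫ p, exp (-(ω / |v p|)) * h p ∂μ) (𝓝[≥] 0) (𝓝 (∫ p, h p ∂μ)) := by
  have hk_le : ∀ᶠ ω in 𝓝[≥] (0 : ℝ), ∀ p, |exp (-(ω / |v p|))| ≤ 1 := by
    filter_upwards [self_mem_nhdsWithin] with ω (hω : 0 ≤ ω) p
    rw [abs_of_pos (exp_pos _), exp_le_one_iff, neg_nonpos]
    positivity
  simpa using tendsto_integral_mul_of_abs_le_one hh
    (.of_forall fun ω => (by fun_prop : Measurable _).aestronglyMeasurable) hk_le fun p =>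
    ((by fun_prop : Continuous fun ω : ℝ => exp (-(ω / |v p|))).tendsto' 0 1
      (by simp)).mono_left nhdsWithin_le_nhds

theorem tendsto_integral_min_one_div_abs_mul (hv : Measurable v) {h : α → ℝ}
    (hh : Integrable h μ) :
    Tendsto (fun ω => ∫ p, min 1 (ω / |v p|) * h p ∂μ) (𝓝[≥] 0) (𝓝 0) := by
  have hk_le : ∀ᶠ ω in 𝓝[≥] (0 : ℝ), ∀ p, |min 1 (ω / |v p|)| ≤ 1 := by
    filter_upwards [self_mem_nhdsWithin] with ω (hω : 0 ≤ ω) p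
    rw [abs_of_nonneg (by positivity)]
    exact min_le_left _ _
  simpa using tendsto_integral_mul_of_abs_le_one hh
    (.of_forall fun ω => (by fun_prop : Measurable _).aestronglyMeasurable) hk_le fun p =>
    ((by fun_prop : Continuous fun ω : ℝ => min 1 (ω / |v p|)).tendsto' 0 0
      (by simp)).mono_left nhdsWithin_le_nhds

end Measurability

end Slab

theorem stmt_13_general (c m : ℝ) (hc : 0 < c) (hm : 0 < m)
    (fL fR : EuclideanSpace ℝ (Fin 3) → ℝ)
    (hfL : Integrable fL) (hfR : Integrable fR)
    (hLnn : ∀ p, 0 ≤ fL p) (hRnn : ∀ p, 0 ≤ fR p)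
    (fLR : EuclideanSpace ℝ (Fin 3) → ℝ)
    (hfLR : fLR = fun p => (if 0 < p 0 then fL p else 0) + (if p 0 < 0 then fR p else 0))
    (al au : ℝ)
    (hal : al = (1 / 4) * ∫ p, fLR p / Real.sqrt ((c * m) ^ 2 + ‖p‖ ^ 2))
    (hau : au = 2 * ∫ p, fLR p)
    (halpos : 0 < al)
    (C1 C2 : ℝ) (hC2 : 0 < C2) :
    ∃ ε > (0 : ℝ), ∀ ω ∈ Set.Ioo (0 : ℝ) ε,
      ∀ J : ℝ → EuclideanSpace ℝ (Fin 3) → ℝ,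
        Measurable (fun q : ℝ × EuclideanSpace ℝ (Fin 3) => J q.1 q.2) →
        (∀ y ∈ Set.Icc (0 : ℝ) 1, ∀ p : EuclideanSpace ℝ (Fin 3),
          0 ≤ J y p ∧ J y p ≤ C1 * Real.exp (-C2 * Real.sqrt ((c * m) ^ 2 + ‖p‖ ^ 2))) →
        ∀ Ψ : ℝ → EuclideanSpace ℝ (Fin 3) → ℝ,
          (Ψ = fun x p =>
            (if 0 < p 0 then
              Real.exp (-(ω / |p 0|) * x) * fL p +
                (ω / |p 0|) * ∫ y in (0 : ℝ)..x, Real.exp (-(ω / |p 0|) * (x - y)) * J y p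
            else 0) +
            (if p 0 < 0 then
              Real.exp (-(ω / |p 0|) * (1 - x)) * fR p +
                (ω / |p 0|) * ∫ y in x..(1 : ℝ), Real.exp (-(ω / |p 0|) * (y - x)) * J y p
            else 0)) →
          ∀ x ∈ Set.Icc (0 : ℝ) 1,
            (∀ p, 0 ≤ Ψ x p) ∧
            al ≤ (∫ p, Ψ x p / Real.sqrt ((c * m) ^ 2 + ‖p‖ ^ 2)) ∧
            (∫ p, Ψ x p) ≤ au := by
  obtain rfl : fLR = inflowData (fun p => p 0) fL fR := hfLR
  have hv : Measurable fun p : EuclideanSpace ℝ (Fin 3) => p 0 := by fun_prop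
  have hκ : c * m ≠ 0 := (mul_pos hc hm).ne'
  have hf := integrable_inflowData hv hfL hfR
  have hB := (integrable_exp_neg_mul_sqrt_add_sq
    (μ := (volume : Measure (EuclideanSpace ℝ (Fin 3)))) hC2 (c * m)).const_mul C1
  have hgap : al < ∫ p, inflowData (fun p => p 0) fL fR p / √((c * m) ^ 2 + ‖p‖ ^ 2) := by
    linarith
  have hmass : 0 < ∫ p, inflowData (fun p => p 0) fL fR p :=
    integral_pos_of_integral_div_pos hf (inflowData_nonneg hLnn hRnn) (hgap.trans' halpos)
  obtain ⟨ε, hε, hsmall⟩ := mem_nhdsGE_iff_exists_Ico_subset.1 <|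
    ((tendsto_integral_exp_neg_div_abs_mul hv (hf.div_sqrt_sq_add_norm_sq_s13 hκ)).eventually
      (lt_mem_nhds hgap)).and
    ((tendsto_integral_min_one_div_abs_mul hv hB).eventually (gt_mem_nhds hmass))
  refine ⟨ε, hε, fun ω hω J hJm hJ Ψ hΨ x hx => ?_⟩
  obtain ⟨hlower, hupper⟩ := hsmall (Ioo_subset_Ico_self hω)
  obtain rfl : Ψ = slabSolution (fun p => p 0) ω fL fR J := hΨ
  have hJ_nonneg y hy p := (hJ y hy p).1
  have hΨ := integrable_slabSolution hv hfL hfR hLnn hRnn hω.1 hx hJm hJ hB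
  refine ⟨slabSolution_nonneg hω.1.le hx hLnn hRnn hJ_nonneg, hlower.le.trans
    (integral_exp_neg_mul_inflowData_div_le (fun p => sqrt_nonneg _) hω.1.le hx hLnn hRnn
      hJ_nonneg (hΨ.div_sqrt_sq_add_norm_sq_s13 hκ)), ?_⟩
  linarith [integral_slabSolution_le hv hfL hfR hLnn hRnn hω.1 hx hJm hJ hB]

theorem stmt_13 (c m : ℝ) (hc : 0 < c) (hm : 0 < m)
    (fL fR : EuclideanSpace ℝ (Fin 3) → ℝ)
    (hfL : Integrable fL) (hfR : Integrable fR)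
    (hLnn : ∀ p, 0 ≤ fL p) (hRnn : ∀ p, 0 ≤ fR p)
    (fLR : EuclideanSpace ℝ (Fin 3) → ℝ)
    (hfLR : fLR = fun p => (if 0 < p 0 then fL p else 0) + (if p 0 < 0 then fR p else 0))
    (al au : ℝ)
    (hal : al = (1 / 4) * ∫ p, fLR p / Real.sqrt ((c * m) ^ 2 + ‖p‖ ^ 2))
    (hau : au = 2 * ∫ p, fLR p)
    (halpos : 0 < al)
    (C1 C2 : ℝ) (hC1 : 0 < C1) (hC2 : 0 < C2) :
    ∃ ε > (0 : ℝ), ∀ ω ∈ Set.Ioo (0 : ℝ) ε,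
      ∀ J : ℝ → EuclideanSpace ℝ (Fin 3) → ℝ,
        Measurable (fun q : ℝ × EuclideanSpace ℝ (Fin 3) => J q.1 q.2) →
        (∀ y ∈ Set.Icc (0 : ℝ) 1, ∀ p : EuclideanSpace ℝ (Fin 3),
          0 ≤ J y p ∧ J y p ≤ C1 * Real.exp (-C2 * Real.sqrt ((c * m) ^ 2 + ‖p‖ ^ 2))) →
        ∀ Ψ : ℝ → EuclideanSpace ℝ (Fin 3) → ℝ,
          (Ψ = fun x p =>
            (if 0 < p 0 then
              Real.exp (-(ω / |p 0|) * x) * fL p +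
                (ω / |p 0|) * ∫ y in (0 : ℝ)..x, Real.exp (-(ω / |p 0|) * (x - y)) * J y p
            else 0) +
            (if p 0 < 0 then
              Real.exp (-(ω / |p 0|) * (1 - x)) * fR p +
                (ω / |p 0|) * ∫ y in x..(1 : ℝ), Real.exp (-(ω / |p 0|) * (y - x)) * J y p
            else 0)) →
          ∀ x ∈ Set.Icc (0 : ℝ) 1,
            (∀ p, 0 ≤ Ψ x p) ∧
            al ≤ (∫ p, Ψ x p / Real.sqrt ((c * m) ^ 2 + ‖p‖ ^ 2)) ∧
            (∫ p, Ψ x p) ≤ au :=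
  stmt_13_general c m hc hm fL fR hfL hfR hLnn hRnn fLR hfLR al au hal hau halpos C1 C2 hC2
end

section
/- Let N ≥ 1, c > 0, and for i = 1,…,N let m_i, ω_i > 0, a_{i,ℓ} > 0, a_{i,u} > 0, writing p_i⁰ = √((c·m_i)² + |p|²). For an N-tuple f = (f_1,…,f_N) of nonnegative integrable functions on ℝ³ with a_{i,ℓ} ≤ ∫ f_i/p_i⁰ dp and ∫ f_i dp ≤ a_{i,u} for each i, define A⃗_f = Σ_i ω_i ∫ (p/p_i⁰) f_i dp, A⁰_f = Σ_i ω_i ∫ f_i dp, and Ũ_f = c·A⃗_f/√((A⁰_f)² − |A⃗_f|²) ∈ ℝ³. Then there exists a constant C > 0, depending only on N, c, and the m_i, ω_i, a_{i,ℓ}, a_{i,u}, such that for any two such tuples f and g: |Ũ_f − Ũ_g| ≤ C Σ_{i=1}^N ‖f_i − g_i‖_{L¹(ℝ³)}. -/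
/-!
Each species contributes the four-vector `∫ (1, p/p⁰) f dp`, whose Minkowski length is at least
`c m ∫ f/p⁰ ≥ c m a_ℓ`: pointwise, `(p, c m)/p⁰` is a unit vector of `ℝ³ × ℝ`, and Cauchy–Schwarz
passes this through the integral. Minkowski lengths of future-timelike vectors are superadditive
(Cauchy–Schwarz once more), so `(A⁰_f)² - |A_f|²` stays above a positive constant `κ²`, while
`|A_f| ≤ A⁰_f ≤ Σ ωᵢ a_{i,u}`. On this region `(a, b) ↦ c b / √(a² - |b|²)` is Lipschitz, and the
moments `(A⁰_f, A_f)` are `L¹`-Lipschitz in `f` because `|p|/p⁰ ≤ 1`.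
-/

open MeasureTheory
open scoped RealInnerProductSpace

section Cone

variable {F : Type*} [NormedAddCommGroup F] [InnerProductSpace ℝ F]

theorem inner_add_mul_le_mul {u v : F} {s t a b : ℝ} (ha : 0 ≤ a) (hb : 0 ≤ b)
    (hu : ‖u‖ ^ 2 + s ^ 2 ≤ a ^ 2) (hv : ‖v‖ ^ 2 + t ^ 2 ≤ b ^ 2) :
    ⟪u, v⟫ + s * t ≤ a * b := by
  have hcs : (‖u‖ * ‖v‖ + s * t) ^ 2 ≤ (a * b) ^ 2 := by
    nlinarith [sq_nonneg (‖u‖ * t - s * ‖v‖), mul_le_mul hu hv (by positivity) (sq_nonneg a)]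
  nlinarith [real_inner_le_norm u v, abs_le_of_sq_le_sq' hcs (mul_nonneg ha hb)]

theorem le_sq_of_le_sqrt_mul {x T : ℝ} (hx : 0 ≤ x) (h : x ≤ √x * T) : x ≤ T ^ 2 := by
  rcases hx.eq_or_lt with rfl | hx
  · positivity
  have hsq : √x ≤ T := by
    have := Real.sqrt_pos.2 hx
    nlinarith [Real.mul_self_sqrt hx.le]
  calc x = √x ^ 2 := (Real.sq_sqrt hx.le).symm
    _ ≤ T ^ 2 := pow_le_pow_left₀ (Real.sqrt_nonneg x) hsq 2

theorem norm_sum_smul_sq_add_sq_le {ι : Type*} (s : Finset ι) {ω a t : ι → ℝ} {v : ι → F}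
    (hω : ∀ i, 0 ≤ ω i) (ha : ∀ i, 0 ≤ a i) (h : ∀ i, ‖v i‖ ^ 2 + t i ^ 2 ≤ a i ^ 2) :
    ‖∑ i ∈ s, ω i • v i‖ ^ 2 + (∑ i ∈ s, ω i * t i) ^ 2 ≤ (∑ i ∈ s, ω i * a i) ^ 2 := by
  set B := ∑ i ∈ s, ω i • v i
  set S := ∑ i ∈ s, ω i * t i
  apply le_sq_of_le_sqrt_mul (by positivity)
  have hB : ‖B‖ ^ 2 = ∑ i ∈ s, ω i * ⟪B, v i⟫ := by
    rw [← real_inner_self_eq_norm_sq]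
    change ⟪B, ∑ i ∈ s, ω i • v i⟫ = _
    simp only [inner_sum, real_inner_smul_right]
  have hS : S ^ 2 = ∑ i ∈ s, ω i * (S * t i) := by
    rw [sq]
    change S * ∑ i ∈ s, ω i * t i = _
    rw [Finset.mul_sum]
    exact Finset.sum_congr rfl fun i _ => by ring
  calc ‖B‖ ^ 2 + S ^ 2 = ∑ i ∈ s, ω i * (⟪B, v i⟫ + S * t i) := by
        simp only [hB, hS, mul_add, Finset.sum_add_distrib]
    _ ≤ ∑ i ∈ s, ω i * (√(‖B‖ ^ 2 + S ^ 2) * a i) := by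
        gcongr with i
        · exact hω i
        exact inner_add_mul_le_mul (Real.sqrt_nonneg _) (ha i)
          (Real.sq_sqrt (by positivity)).ge (h i)
    _ = √(‖B‖ ^ 2 + S ^ 2) * ∑ i ∈ s, ω i * a i := by
        rw [Finset.mul_sum]; exact Finset.sum_congr rfl fun i _ => by ring

theorem norm_integral_sq_add_sq_le {α : Type*} [MeasurableSpace α] {μ : Measure α}
    [CompleteSpace F] {φ : α → F} {ψ f : α → ℝ} (hφ : Integrable φ μ) (hψ : Integrable ψ μ)
    (hf : Integrable f μ) (hf0 : ∀ x, 0 ≤ f x) (h : ∀ x, ‖φ x‖ ^ 2 + ψ x ^ 2 ≤ f x ^ 2) :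
    ‖∫ x, φ x ∂μ‖ ^ 2 + (∫ x, ψ x ∂μ) ^ 2 ≤ (∫ x, f x ∂μ) ^ 2 := by
  set B := ∫ x, φ x ∂μ
  set S := ∫ x, ψ x ∂μ
  apply le_sq_of_le_sqrt_mul (by positivity)
  calc ‖B‖ ^ 2 + S ^ 2 = ∫ x, (⟪B, φ x⟫ + S * ψ x) ∂μ := by
        rw [integral_add ((hφ.const_inner B)) (hψ.const_mul S), integral_inner hφ,
          integral_const_mul, real_inner_self_eq_norm_sq, sq S]
    _ ≤ ∫ x, √(‖B‖ ^ 2 + S ^ 2) * f x ∂μ :=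
        integral_mono ((hφ.const_inner B).add (hψ.const_mul S)) (hf.const_mul _) fun x =>
          inner_add_mul_le_mul (Real.sqrt_nonneg _) (hf0 x) (Real.sq_sqrt (by positivity)).ge
            (h x)
    _ = √(‖B‖ ^ 2 + S ^ 2) * ∫ x, f x ∂μ := integral_const_mul _ _

end Cone

section Energy

variable {E : Type*} [NormedAddCommGroup E]

/-- The energy `p⁰ = √(k² + |p|²)` on the mass shell of mass parameter `k = c m`. -/
noncomputable def energy (k : ℝ) (p : E) : ℝ := √(k ^ 2 + ‖p‖ ^ 2)

theorem energy_pos {k : ℝ} (hk : 0 < k) (p : E) : 0 < energy k p :=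
  Real.sqrt_pos.2 (by positivity)

theorem sq_energy (k : ℝ) (p : E) : energy k p ^ 2 = k ^ 2 + ‖p‖ ^ 2 :=
  Real.sq_sqrt (by positivity)

theorem le_energy (k : ℝ) (p : E) : k ≤ energy k p :=
  Real.le_sqrt_of_sq_le (le_add_of_nonneg_right (by positivity))

theorem norm_le_energy (k : ℝ) (p : E) : ‖p‖ ≤ energy k p :=
  Real.le_sqrt_of_sq_le (le_add_of_nonneg_left (by positivity))

theorem continuous_energy (k : ℝ) : Continuous (energy k : E → ℝ) := by
  unfold energy; fun_prop

variable [MeasurableSpace E] [BorelSpace E] {μ : Measure E}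

theorem MeasureTheory.Integrable.div_energy {k : ℝ} (hk : 0 < k) {f : E → ℝ}
    (hf : Integrable f μ) : Integrable (fun p => f p / energy k p) μ := by
  refine (hf.div_const k).mono (hf.1.div₀ (continuous_energy k).aestronglyMeasurable)
    (.of_forall fun p => ?_)
  simp only [norm_div, Real.norm_eq_abs, abs_of_pos hk, abs_of_pos (energy_pos hk p)]
  gcongr
  exact le_energy k p

end Energy

section MassShell

variable {E : Type*} [NormedAddCommGroup E] [NormedSpace ℝ E]

theorem norm_smul_sq_add_sq_eq {k : ℝ} (hk : 0 < k) (x : ℝ) (p : E) :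
    ‖(x / energy k p) • p‖ ^ 2 + (k * (x / energy k p)) ^ 2 = x ^ 2 := by
  have := (energy_pos hk p).ne'
  have := sq_energy k p
  rw [norm_smul, Real.norm_eq_abs, mul_pow, sq_abs]
  field_simp
  rw [this]; ring

theorem norm_div_energy_smul_le (k x : ℝ) (p : E) : ‖(x / energy k p) • p‖ ≤ |x| := by
  have he : 0 ≤ energy k p := Real.sqrt_nonneg _
  calc ‖(x / energy k p) • p‖ = |x| * (‖p‖ / energy k p) := by
        rw [norm_smul, Real.norm_eq_abs, abs_div, abs_of_nonneg he]; ring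
    _ ≤ |x| * 1 := by gcongr; exact div_le_one_of_le₀ (norm_le_energy k p) he
    _ = |x| := mul_one _

variable [MeasurableSpace E] [BorelSpace E] [SecondCountableTopology E] {μ : Measure E}

theorem MeasureTheory.Integrable.div_energy_smul {k : ℝ} (hk : 0 < k) {f : E → ℝ}
    (hf : Integrable f μ) : Integrable (fun p => (f p / energy k p) • p) μ := by
  refine hf.mono ((hf.div_energy hk).1.smul aestronglyMeasurable_id) (.of_forall fun p => ?_)
  simpa only [Real.norm_eq_abs] using norm_div_energy_smul_le k (f p) p

end MassShell

section Moments

variable {E : Type*} [NormedAddCommGroup E] [InnerProductSpace ℝ E]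
  [MeasurableSpace E] [BorelSpace E] [SecondCountableTopology E] {μ : Measure E}

/-- `∫ (f / p⁰) p dp`, the contribution of one species to the spatial moment `A_f`. -/
noncomputable def fluxMoment (μ : Measure E) (k : ℝ) (f : E → ℝ) : E :=
  ∫ p, (f p / energy k p) • p ∂μ

theorem norm_fluxMoment_sub_le {k : ℝ} (hk : 0 < k) {f g : E → ℝ} (hf : Integrable f μ)
    (hg : Integrable g μ) :
    ‖fluxMoment μ k f - fluxMoment μ k g‖ ≤ ∫ p, |f p - g p| ∂μ := by
  rw [fluxMoment, fluxMoment, ← integral_sub (hf.div_energy_smul hk) (hg.div_energy_smul hk)]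
  refine norm_integral_le_of_norm_le (hf.sub hg).abs (.of_forall fun p => ?_)
  rw [← sub_smul, ← sub_div]
  exact norm_div_energy_smul_le k _ p

variable {ι : Type*} (s : Finset ι) {k ω : ι → ℝ}

theorem abs_sub_add_norm_sub_le (hk : ∀ i, 0 < k i) (hω : ∀ i, 0 ≤ ω i) {f g : ι → E → ℝ}
    (hf : ∀ i, Integrable (f i) μ) (hg : ∀ i, Integrable (g i) μ) :
    |∑ i ∈ s, ω i * ∫ p, f i p ∂μ - ∑ i ∈ s, ω i * ∫ p, g i p ∂μ| +
        ‖∑ i ∈ s, ω i • fluxMoment μ (k i) (f i) - ∑ i ∈ s, ω i • fluxMoment μ (k i) (g i)‖ ≤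
      2 * ∑ i ∈ s, ω i * ∫ p, |f i p - g i p| ∂μ := by
  have hdensity : |∑ i ∈ s, ω i * ∫ p, f i p ∂μ - ∑ i ∈ s, ω i * ∫ p, g i p ∂μ| ≤
      ∑ i ∈ s, ω i * ∫ p, |f i p - g i p| ∂μ := by
    rw [← Finset.sum_sub_distrib]
    refine (Finset.abs_sum_le_sum_abs _ _).trans (Finset.sum_le_sum fun i _ => ?_)
    rw [← mul_sub, abs_mul, abs_of_nonneg (hω i), ← integral_sub (hf i) (hg i)]
    exact mul_le_mul_of_nonneg_left (abs_integral_le_integral_abs) (hω i)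
  have hflux : ‖∑ i ∈ s, ω i • fluxMoment μ (k i) (f i) -
      ∑ i ∈ s, ω i • fluxMoment μ (k i) (g i)‖ ≤ ∑ i ∈ s, ω i * ∫ p, |f i p - g i p| ∂μ := by
    rw [← Finset.sum_sub_distrib]
    refine (norm_sum_le _ _).trans (Finset.sum_le_sum fun i _ => ?_)
    rw [← smul_sub, norm_smul, Real.norm_eq_abs, abs_of_nonneg (hω i)]
    exact mul_le_mul_of_nonneg_left (norm_fluxMoment_sub_le (hk i) (hf i) (hg i)) (hω i)
  linarith

variable [CompleteSpace E]

theorem norm_fluxMoment_sq_add_sq_le {k : ℝ} (hk : 0 < k) {f : E → ℝ} (hf : Integrable f μ)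
    (hf0 : ∀ p, 0 ≤ f p) :
    ‖fluxMoment μ k f‖ ^ 2 + (k * ∫ p, f p / energy k p ∂μ) ^ 2 ≤ (∫ p, f p ∂μ) ^ 2 := by
  rw [← integral_const_mul]
  exact norm_integral_sq_add_sq_le (hf.div_energy_smul hk) ((hf.div_energy hk).const_mul k) hf
    hf0 fun p => (norm_smul_sq_add_sq_eq hk (f p) p).le

theorem sq_add_norm_sum_fluxMoment_sq_le {l : ι → ℝ} (hk : ∀ i, 0 < k i) (hω : ∀ i, 0 ≤ ω i)
    (hl : ∀ i, 0 ≤ l i) {f : ι → E → ℝ} (hf : ∀ i, Integrable (f i) μ) (hf0 : ∀ i p, 0 ≤ f i p)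
    (hfl : ∀ i, l i ≤ ∫ p, f i p / energy (k i) p ∂μ) :
    (∑ i ∈ s, ω i * (k i * l i)) ^ 2 + ‖∑ i ∈ s, ω i • fluxMoment μ (k i) (f i)‖ ^ 2 ≤
      (∑ i ∈ s, ω i * ∫ p, f i p ∂μ) ^ 2 := by
  have hcone := norm_sum_smul_sq_add_sq_le s hω (fun i => integral_nonneg (hf0 i))
    fun i => norm_fluxMoment_sq_add_sq_le (hk i) (hf i) (hf0 i)
  have hlow : (∑ i ∈ s, ω i * (k i * l i)) ^ 2 ≤
      (∑ i ∈ s, ω i * (k i * ∫ p, f i p / energy (k i) p ∂μ)) ^ 2 := by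
    refine pow_le_pow_left₀ (Finset.sum_nonneg fun i _ =>
      mul_nonneg (hω i) (mul_nonneg (hk i).le (hl i))) (Finset.sum_le_sum fun i _ => ?_) 2
    exact mul_le_mul_of_nonneg_left (mul_le_mul_of_nonneg_left (hfl i) (hk i).le) (hω i)
  linarith

end Moments

theorem Finset.sum_mul_le_sum_mul_sum {ι : Type*} (s : Finset ι) {a b : ι → ℝ}
    (ha : ∀ i ∈ s, 0 ≤ a i) (hb : ∀ i ∈ s, 0 ≤ b i) :
    ∑ i ∈ s, a i * b i ≤ (∑ i ∈ s, a i) * ∑ i ∈ s, b i := by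
  rw [Finset.sum_mul]
  exact Finset.sum_le_sum fun i hi =>
    mul_le_mul_of_nonneg_left (Finset.single_le_sum hb hi) (ha i hi)

theorem abs_sqrt_sub_sqrt_le {κ x y : ℝ} (hκ : 0 < κ) (hx : κ ^ 2 ≤ x) (hy : κ ^ 2 ≤ y) :
    |√x - √y| ≤ |x - y| / (2 * κ) := by
  have hκx : κ ≤ √x := Real.le_sqrt_of_sq_le hx
  have hκy : κ ≤ √y := Real.le_sqrt_of_sq_le hy
  have hxy : x - y = (√x - √y) * (√x + √y) := by
    linear_combination (-1 : ℝ) * Real.sq_sqrt ((sq_nonneg κ).trans hx) +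
      Real.sq_sqrt ((sq_nonneg κ).trans hy)
  rw [le_div_iff₀ (by positivity), hxy, abs_mul, abs_of_pos (by linarith : 0 < √x + √y)]
  gcongr
  linarith

section AuxVelocity

variable {F : Type*} [NormedAddCommGroup F]

theorem abs_sq_sub_norm_sq_sub_le {a a' M : ℝ} {b b' : F} (hb : ‖b‖ ≤ a) (hb' : ‖b'‖ ≤ a')
    (ha : a ≤ M) (ha' : a' ≤ M) :
    |(a ^ 2 - ‖b‖ ^ 2) - (a' ^ 2 - ‖b'‖ ^ 2)| ≤ 2 * M * (|a - a'| + ‖b - b'‖) := by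
  have h0 : 0 ≤ ‖b‖ := norm_nonneg b
  have h0' : 0 ≤ ‖b'‖ := norm_nonneg b'
  have hsq_a : |a ^ 2 - a' ^ 2| ≤ 2 * M * |a - a'| := by
    rw [sq_sub_sq, abs_mul, abs_of_nonneg (by linarith : 0 ≤ a + a')]
    gcongr; linarith
  have hsq_b : |‖b‖ ^ 2 - ‖b'‖ ^ 2| ≤ 2 * M * ‖b - b'‖ := by
    rw [sq_sub_sq, abs_mul, abs_of_nonneg (by linarith : 0 ≤ ‖b‖ + ‖b'‖)]
    exact mul_le_mul (by linarith) (abs_norm_sub_norm_le b b') (abs_nonneg _) (by linarith)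
  calc |(a ^ 2 - ‖b‖ ^ 2) - (a' ^ 2 - ‖b'‖ ^ 2)|
      = |(a ^ 2 - a' ^ 2) - (‖b‖ ^ 2 - ‖b'‖ ^ 2)| := by ring_nf
    _ ≤ |a ^ 2 - a' ^ 2| + |‖b‖ ^ 2 - ‖b'‖ ^ 2| := abs_sub _ _
    _ ≤ 2 * M * (|a - a'| + ‖b - b'‖) := by linarith

variable [NormedSpace ℝ F]

/-- The spatial part `c A / √(A⁰² - |A|²)` of the four-velocity of a timelike four-vector
`(A⁰, A)`. -/
noncomputable def auxVelocity (c a : ℝ) (b : F) : F := (c / √(a ^ 2 - ‖b‖ ^ 2)) • b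

theorem norm_auxVelocity_sub_le {c κ M a a' : ℝ} {b b' : F} (hc : 0 ≤ c) (hκ : 0 < κ)
    (h : κ ^ 2 + ‖b‖ ^ 2 ≤ a ^ 2) (h' : κ ^ 2 + ‖b'‖ ^ 2 ≤ a' ^ 2) (ha : 0 ≤ a) (ha' : 0 ≤ a')
    (haM : a ≤ M) (haM' : a' ≤ M) :
    ‖auxVelocity c a b - auxVelocity c a' b'‖ ≤
      (c / κ + c * M ^ 2 / κ ^ 3) * (|a - a'| + ‖b - b'‖) := by
  set r := √(a ^ 2 - ‖b‖ ^ 2)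
  set r' := √(a' ^ 2 - ‖b'‖ ^ 2)
  have hr : κ ≤ r := Real.le_sqrt_of_sq_le (by linarith)
  have hr' : κ ≤ r' := Real.le_sqrt_of_sq_le (by linarith)
  have hb' : ‖b'‖ ≤ a' := (sq_le_sq₀ (norm_nonneg _) ha').1 (by linarith [sq_nonneg κ])
  have hb : ‖b‖ ≤ a := (sq_le_sq₀ (norm_nonneg _) ha).1 (by linarith [sq_nonneg κ])
  have hM : 0 ≤ M * (|a - a'| + ‖b - b'‖) := mul_nonneg (ha.trans haM) (by positivity)
  have hrr' : |r - r'| ≤ M * (|a - a'| + ‖b - b'‖) / κ := by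
    calc |r - r'| ≤ |(a ^ 2 - ‖b‖ ^ 2) - (a' ^ 2 - ‖b'‖ ^ 2)| / (2 * κ) :=
          abs_sqrt_sub_sqrt_le hκ (by linarith) (by linarith)
      _ ≤ 2 * M * (|a - a'| + ‖b - b'‖) / (2 * κ) := by
          gcongr; exact abs_sq_sub_norm_sq_sub_le hb hb' haM haM'
      _ = M * (|a - a'| + ‖b - b'‖) / κ := by field_simp
  have hinv : |c / r - c / r'| ≤ c * (M * (|a - a'| + ‖b - b'‖) / κ) / κ ^ 2 := by
    have hr0 : 0 < r := hκ.trans_le hr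
    have hr0' : 0 < r' := hκ.trans_le hr'
    rw [show c / r - c / r' = c * (r' - r) / (r * r') by field_simp, abs_div, abs_mul,
      abs_of_nonneg hc, abs_of_pos (mul_pos hr0 hr0'), abs_sub_comm, sq]
    gcongr
  have hsplit : auxVelocity c a b - auxVelocity c a' b' =
      (c / r) • (b - b') + (c / r - c / r') • b' := by
    simp only [auxVelocity, r, r']; module
  rw [hsplit]
  calc ‖(c / r) • (b - b') + (c / r - c / r') • b'‖
      ≤ c / r * ‖b - b'‖ + |c / r - c / r'| * ‖b'‖ := by
        refine (norm_add_le _ _).trans_eq ?_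
        rw [norm_smul, norm_smul, Real.norm_eq_abs, Real.norm_eq_abs,
          abs_of_nonneg (by positivity)]
    _ ≤ c / κ * (|a - a'| + ‖b - b'‖) + c * (M * (|a - a'| + ‖b - b'‖) / κ) / κ ^ 2 * M := by
        refine add_le_add (mul_le_mul (div_le_div_of_nonneg_left hc hκ hr)
          (le_add_of_nonneg_left (abs_nonneg _)) (norm_nonneg _) (by positivity))
          (mul_le_mul hinv (hb'.trans haM') (norm_nonneg _)
            (div_nonneg (mul_nonneg hc (div_nonneg hM hκ.le)) (sq_nonneg κ)))
    _ = (c / κ + c * M ^ 2 / κ ^ 3) * (|a - a'| + ‖b - b'‖) := by field_simp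

end AuxVelocity

theorem stmt_16_general (N : ℕ) (hN : 1 ≤ N) (c : ℝ) (hc : 0 < c)
    (m ω al au : Fin N → ℝ) (hm : ∀ i, 0 < m i) (hω : ∀ i, 0 < ω i)
    (hal : ∀ i, 0 < al i) :
    ∃ C > (0 : ℝ), ∀ f g : Fin N → EuclideanSpace ℝ (Fin 3) → ℝ,
      (∀ i, Integrable (f i)) → (∀ i p, 0 ≤ f i p) →
      (∀ i, al i ≤ ∫ p, f i p / Real.sqrt ((c * m i) ^ 2 + ‖p‖ ^ 2)) →
      (∀ i, (∫ p, f i p) ≤ au i) →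
      (∀ i, Integrable (g i)) → (∀ i p, 0 ≤ g i p) →
      (∀ i, al i ≤ ∫ p, g i p / Real.sqrt ((c * m i) ^ 2 + ‖p‖ ^ 2)) →
      (∀ i, (∫ p, g i p) ≤ au i) →
      ‖(c / Real.sqrt ((∑ i, ω i * ∫ p, f i p) ^ 2 -
            ‖∑ i, ω i • ∫ p : EuclideanSpace ℝ (Fin 3),
              (f i p / Real.sqrt ((c * m i) ^ 2 + ‖p‖ ^ 2)) • p‖ ^ 2)) •
          (∑ i, ω i • ∫ p : EuclideanSpace ℝ (Fin 3),
            (f i p / Real.sqrt ((c * m i) ^ 2 + ‖p‖ ^ 2)) • p) -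
        (c / Real.sqrt ((∑ i, ω i * ∫ p, g i p) ^ 2 -
            ‖∑ i, ω i • ∫ p : EuclideanSpace ℝ (Fin 3),
              (g i p / Real.sqrt ((c * m i) ^ 2 + ‖p‖ ^ 2)) • p‖ ^ 2)) •
          (∑ i, ω i • ∫ p : EuclideanSpace ℝ (Fin 3),
            (g i p / Real.sqrt ((c * m i) ^ 2 + ‖p‖ ^ 2)) • p)‖ ≤
      C * ∑ i, ∫ p, |f i p - g i p| := by
  have : Nonempty (Fin N) := ⟨⟨0, hN⟩⟩
  have hk : ∀ i, 0 < c * m i := fun i => mul_pos hc (hm i)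
  have hω0 : ∀ i, 0 ≤ ω i := fun i => (hω i).le
  set κ := ∑ i, ω i * (c * m i * al i)
  set M := ∑ i, ω i * au i
  have hκ : 0 < κ := Finset.sum_pos (fun i _ => mul_pos (hω i) (mul_pos (hk i) (hal i)))
    Finset.univ_nonempty
  have hC : 0 < 2 * (∑ i, ω i) * (c / κ + c * M ^ 2 / κ ^ 3) :=
    mul_pos (mul_pos two_pos (Finset.sum_pos (fun i _ => hω i) Finset.univ_nonempty))
      (add_pos_of_pos_of_nonneg (div_pos hc hκ)
        (div_nonneg (mul_nonneg hc.le (sq_nonneg M)) (pow_nonneg hκ.le 3)))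
  refine ⟨_, hC, ?_⟩
  intro f g hf hf0 hfal hfau hg hg0 hgal hgau
  have hA0_le : ∀ h : Fin N → EuclideanSpace ℝ (Fin 3) → ℝ, (∀ i, (∫ p, h i p) ≤ au i) →
      ∑ i, ω i * ∫ p, h i p ≤ M := fun h hh =>
    Finset.sum_le_sum fun i _ => mul_le_mul_of_nonneg_left (hh i) (hω0 i)
  have hdist : ∑ i, ω i * ∫ p, |f i p - g i p| ≤ (∑ i, ω i) * ∑ i, ∫ p, |f i p - g i p| :=
    Finset.sum_mul_le_sum_mul_sum _ (fun i _ => hω0 i) fun i _ =>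
      integral_nonneg fun _ => abs_nonneg _
  show ‖auxVelocity c _ (∑ i, ω i • fluxMoment volume (c * m i) (f i)) -
      auxVelocity c _ (∑ i, ω i • fluxMoment volume (c * m i) (g i))‖ ≤ _
  calc _ ≤ (c / κ + c * M ^ 2 / κ ^ 3) * (2 * ∑ i, ω i * ∫ p, |f i p - g i p|) := by
        refine (norm_auxVelocity_sub_le hc.le hκ
          (sq_add_norm_sum_fluxMoment_sq_le _ hk hω0 (fun i => (hal i).le) hf hf0 hfal)
          (sq_add_norm_sum_fluxMoment_sq_le _ hk hω0 (fun i => (hal i).le) hg hg0 hgal)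
          (Finset.sum_nonneg fun i _ => mul_nonneg (hω0 i) (integral_nonneg (hf0 i)))
          (Finset.sum_nonneg fun i _ => mul_nonneg (hω0 i) (integral_nonneg (hg0 i)))
          (hA0_le f hfau) (hA0_le g hgau)).trans ?_
        gcongr
        exact abs_sub_add_norm_sub_le _ hk hω0 hf hg
    _ ≤ (c / κ + c * M ^ 2 / κ ^ 3) * (2 * ((∑ i, ω i) * ∑ i, ∫ p, |f i p - g i p|)) := by
        gcongr
    _ = _ := by ring

theorem stmt_16 (N : ℕ) (hN : 1 ≤ N) (c : ℝ) (hc : 0 < c)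
    (m ω al au : Fin N → ℝ) (hm : ∀ i, 0 < m i) (hω : ∀ i, 0 < ω i)
    (hal : ∀ i, 0 < al i) (hau : ∀ i, 0 < au i) :
    ∃ C > (0 : ℝ), ∀ f g : Fin N → EuclideanSpace ℝ (Fin 3) → ℝ,
      (∀ i, Integrable (f i)) → (∀ i p, 0 ≤ f i p) →
      (∀ i, al i ≤ ∫ p, f i p / Real.sqrt ((c * m i) ^ 2 + ‖p‖ ^ 2)) →
      (∀ i, (∫ p, f i p) ≤ au i) →
      (∀ i, Integrable (g i)) → (∀ i p, 0 ≤ g i p) →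
      (∀ i, al i ≤ ∫ p, g i p / Real.sqrt ((c * m i) ^ 2 + ‖p‖ ^ 2)) →
      (∀ i, (∫ p, g i p) ≤ au i) →
      ‖(c / Real.sqrt ((∑ i, ω i * ∫ p, f i p) ^ 2 -
            ‖∑ i, ω i • ∫ p : EuclideanSpace ℝ (Fin 3),
              (f i p / Real.sqrt ((c * m i) ^ 2 + ‖p‖ ^ 2)) • p‖ ^ 2)) •
          (∑ i, ω i • ∫ p : EuclideanSpace ℝ (Fin 3),
            (f i p / Real.sqrt ((c * m i) ^ 2 + ‖p‖ ^ 2)) • p) -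
        (c / Real.sqrt ((∑ i, ω i * ∫ p, g i p) ^ 2 -
            ‖∑ i, ω i • ∫ p : EuclideanSpace ℝ (Fin 3),
              (g i p / Real.sqrt ((c * m i) ^ 2 + ‖p‖ ^ 2)) • p‖ ^ 2)) •
          (∑ i, ω i • ∫ p : EuclideanSpace ℝ (Fin 3),
            (g i p / Real.sqrt ((c * m i) ^ 2 + ‖p‖ ^ 2)) • p)‖ ≤
      C * ∑ i, ∫ p, |f i p - g i p| :=
  stmt_16_general N hN c hc m ω al au hm hω hal
end
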